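/- arXiv:1803.10113 — 2 statements merged into one kernel-verified Lean document; each statement's English description precedes it below -/
import Mathlib

section
/- In EFF propositional truncation exists: every fibration f: B → A factors as a map g: B → C followed by a propositional fibration h: C → A (i.e., a fibration of (−1)-types), universally: if g': B → C' and h': C' → A is another such factorisation with h' a propositional fibration, then there exists a map d: C → C' over A with dg ≃_A g', and any two such maps d are fibrewise homotopic over A. Concretely, for f: (B, β, ℬ) → (A, α, 𝒜) one may take C := (B, β, 𝒞) with 𝒞(b,b') = 𝒜(fb, fb'). -/
namespace EffPaper

/-! ### A small kit for tracking by partial computable functions.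

We encode "partial computable function" via Mathlib's `Partrec` on `ℕ →. ℕ`.
`CompComputes I O` says: there is a partial computable function which, on the input
`I x`, converges and outputs `O x` (for every `x` in some index type `X`).
`CompFinds I S` says: there is a partial computable function which, on the input
`I x`, converges and outputs some element of the set `S x`. -/

def CompComputes {X : Sort*} (I O : X → ℕ) : Prop :=
  ∃ F : ℕ →. ℕ, Partrec F ∧ ∀ x, O x ∈ F (I x)

def CompFinds {X : Sort*} (I : X → ℕ) (S : X → Set ℕ) : Prop :=
  ∃ F : ℕ →. ℕ, Partrec F ∧ ∀ x, ∃ k, k ∈ F (I x) ∧ k ∈ S x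

namespace CompComputes

protected theorem id {X : Sort*} (I : X → ℕ) : CompComputes I I :=
  ⟨fun n => Part.some n, Partrec.some, fun x => Part.mem_some _⟩

protected theorem const {X : Sort*} (I : X → ℕ) (c : ℕ) : CompComputes I fun _ => c :=
  ⟨fun _ => Part.some c, (Computable.const c).partrec, fun _ => Part.mem_some _⟩

protected theorem comp {X : Sort*} {I M O : X → ℕ}
    (h₂ : CompComputes M O) (h₁ : CompComputes I M) : CompComputes I O := by
  obtain ⟨F₁, pF₁, s₁⟩ := h₁
  obtain ⟨F₂, pF₂, s₂⟩ := h₂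
  refine ⟨fun n => (F₁ n).bind F₂, pF₁.bind (pF₂.comp Computable.snd), fun x => ?_⟩
  exact Part.mem_bind_iff.mpr ⟨M x, s₁ x, s₂ x⟩

protected theorem pair {X : Sort*} {I a b : X → ℕ}
    (ha : CompComputes I a) (hb : CompComputes I b) :
    CompComputes I (fun x => Nat.pair (a x) (b x)) := by
  obtain ⟨F₁, pF₁, s₁⟩ := ha
  obtain ⟨F₂, pF₂, s₂⟩ := hb
  refine ⟨fun n => (F₁ n).bind fun u => (F₂ n).map fun v => Nat.pair u v, ?_, fun x => ?_⟩
  · refine pF₁.bind ?_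
    have : Computable₂ fun (p : ℕ × ℕ) (v : ℕ) => Nat.pair p.2 v :=
      Primrec₂.to_comp (Primrec₂.natPair.comp (Primrec.snd.comp Primrec.fst) Primrec.snd)
    exact Partrec.map (pF₂.comp Computable.fst) this
  · exact Part.mem_bind_iff.mpr ⟨a x, s₁ x, (Part.mem_map_iff _).mpr ⟨b x, s₂ x, rfl⟩⟩

protected theorem unpairL {X : Sort*} (I : X → ℕ) :
    CompComputes I (fun x => (I x).unpair.1) :=
  ⟨fun n => Part.some n.unpair.1,
    (Primrec.to_comp (Primrec.fst.comp Primrec.unpair)).partrec, fun _ => Part.mem_some _⟩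

protected theorem unpairR {X : Sort*} (I : X → ℕ) :
    CompComputes I (fun x => (I x).unpair.2) :=
  ⟨fun n => Part.some n.unpair.2,
    (Primrec.to_comp (Primrec.snd.comp Primrec.unpair)).partrec, fun _ => Part.mem_some _⟩

protected theorem projL {X : Sort*} (a b : X → ℕ) :
    CompComputes (fun x => Nat.pair (a x) (b x)) a := by
  have := CompComputes.unpairL (X := X) (fun x => Nat.pair (a x) (b x))
  simpa [Nat.unpair_pair] using this

protected theorem projR {X : Sort*} (a b : X → ℕ) :
    CompComputes (fun x => Nat.pair (a x) (b x)) b := by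
  have := CompComputes.unpairR (X := X) (fun x => Nat.pair (a x) (b x))
  simpa [Nat.unpair_pair] using this

protected theorem precomp {X Y : Sort*} {I O : X → ℕ} (h : CompComputes I O) (e : Y → X) :
    CompComputes (fun y => I (e y)) (fun y => O (e y)) := by
  obtain ⟨F, pF, s⟩ := h
  exact ⟨F, pF, fun y => s (e y)⟩

protected theorem toFinds {X : Sort*} {I o : X → ℕ} {S : X → Set ℕ}
    (h : CompComputes I o) (hm : ∀ x, o x ∈ S x) : CompFinds I S := by
  obtain ⟨F, pF, s⟩ := h
  exact ⟨F, pF, fun x => ⟨o x, s x, hm x⟩⟩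


protected theorem congr {X : Sort*} {I O O' : X → ℕ}
    (h : CompComputes I O) (he : ∀ x, O x = O' x) : CompComputes I O' := by
  obtain ⟨F, pF, s⟩ := h
  exact ⟨F, pF, fun x => he x ▸ s x⟩


/-- Values tracked by a partial computable function are determined by the input. -/
protected theorem determined {X : Sort*} {I O : X → ℕ} (h : CompComputes I O)
    {x y : X} (hxy : I x = I y) : O x = O y := by
  obtain ⟨F, pF, s⟩ := h
  exact Part.mem_unique (s x) (hxy ▸ s y)

end CompComputes

namespace CompFinds

protected theorem toComputes {X : Sort*} {I : X → ℕ} {S : X → Set ℕ} (h : CompFinds I S) :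
    ∃ o : X → ℕ, (∀ x, o x ∈ S x) ∧ CompComputes I o := by
  obtain ⟨F, pF, s⟩ := h
  refine ⟨fun x => (s x).choose, fun x => (s x).choose_spec.2, F, pF, fun x => (s x).choose_spec.1⟩

/-- Reindex a `CompFinds` along `e` and chase the input through a computable function. -/
protected theorem via {Y X : Sort*} {J : X → ℕ} {S : X → Set ℕ} (h : CompFinds J S)
    {I : Y → ℕ} (e : Y → X) (hc : CompComputes I (fun y => J (e y))) :
    CompFinds I (fun y => S (e y)) := by
  obtain ⟨o, hm, hcc⟩ := h.toComputes
  exact CompComputes.toFinds ((hcc.precomp e).comp hc) (fun y => hm (e y))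

end CompFinds

end EffPaper

namespace EffPaper

open CategoryTheory

universe v u

/-! ### Path categories (Van den Berg–Moerdijk style), abstractly.

A `PathStruct` on a category is a pair of classes of maps: fibrations and equivalences.
`IsPathCategory` expresses the seven axioms of a path category. -/

structure PathStruct (C : Type u) [Category.{v} C] where
  Fib : ∀ ⦃X Y : C⦄, (X ⟶ Y) → Prop
  Eqv : ∀ ⦃X Y : C⦄, (X ⟶ Y) → Prop

section PathCatDefs

variable {C : Type u} [Category.{v} C]

/-- `T` is a terminal object. -/
def IsTerminalObj (T : C) : Prop := ∀ Z : C, ∃ f : Z ⟶ T, ∀ g : Z ⟶ T, g = f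

/-- The square with projections `p₁, p₂` is a pullback of the cospan `f, g`. -/
def IsPB {P X Y Z : C} (p₁ : P ⟶ X) (p₂ : P ⟶ Y) (f : X ⟶ Z) (g : Y ⟶ Z) : Prop :=
  p₁ ≫ f = p₂ ≫ g ∧ ∀ (Q : C) (q₁ : Q ⟶ X) (q₂ : Q ⟶ Y), q₁ ≫ f = q₂ ≫ g →
    ∃! h : Q ⟶ P, h ≫ p₁ = q₁ ∧ h ≫ p₂ = q₂

/-- `p₁, p₂` exhibit their common domain as a binary product of `X` and `Y`. -/
def IsBinProd {P X Y : C} (p₁ : P ⟶ X) (p₂ : P ⟶ Y) : Prop :=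
  ∀ (Q : C) (q₁ : Q ⟶ X) (q₂ : Q ⟶ Y), ∃! h : Q ⟶ P, h ≫ p₁ = q₁ ∧ h ≫ p₂ = q₂

variable (S : PathStruct C)

/-- `X → PX → X × X` is a path object for `X`: the first map is an equivalence, the
second (the pairing of `s` and `t` into a binary product `X × X`) is a fibration,
and the composite is the diagonal. -/
def IsPathObj {X PX : C} (r : X ⟶ PX) (s t : PX ⟶ X) : Prop :=
  S.Eqv r ∧ r ≫ s = 𝟙 X ∧ r ≫ t = 𝟙 X ∧
  ∃ (W : C) (π₁ π₂ : W ⟶ X) (h : PX ⟶ W),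
    IsBinProd π₁ π₂ ∧ h ≫ π₁ = s ∧ h ≫ π₂ = t ∧ S.Fib h

/-- A path object for `p : X ⟶ I` in the slice path category `C(I)`:
a factorisation of the fibrewise diagonal `X ⟶ X ×_I X` as an equivalence `r`
followed by a fibration. -/
def IsRelPathObj {X I PX : C} (p : X ⟶ I) (r : X ⟶ PX) (s t : PX ⟶ X) : Prop :=
  S.Eqv r ∧ r ≫ s = 𝟙 X ∧ r ≫ t = 𝟙 X ∧ s ≫ p = t ≫ p ∧
  ∃ (W : C) (π₁ π₂ : W ⟶ X) (h : PX ⟶ W),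
    IsPB π₁ π₂ p p ∧ h ≫ π₁ = s ∧ h ≫ π₂ = t ∧ S.Fib h

/-- The seven axioms for a path category. -/
structure IsPathCategory : Prop where
  fib_of_iso : ∀ {X Y : C} (f : X ⟶ Y), IsIso f → S.Fib f
  fib_comp : ∀ {X Y Z : C} (f : X ⟶ Y) (g : Y ⟶ Z), S.Fib f → S.Fib g → S.Fib (f ≫ g)
  terminal : ∃ T : C, IsTerminalObj T ∧ ∀ (X : C) (f : X ⟶ T), S.Fib f
  pullback : ∀ {X Y Z : C} (f : X ⟶ Z) (g : Y ⟶ Z), S.Fib f →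
    ∃ (P : C) (p₁ : P ⟶ X) (p₂ : P ⟶ Y), IsPB p₁ p₂ f g ∧ S.Fib p₂
  eqv_of_iso : ∀ {X Y : C} (f : X ⟶ Y), IsIso f → S.Eqv f
  two_out_of_six : ∀ {X Y Z W : C} (f : X ⟶ Y) (g : Y ⟶ Z) (h : Z ⟶ W),
    S.Eqv (f ≫ g) → S.Eqv (g ≫ h) →
    S.Eqv f ∧ S.Eqv g ∧ S.Eqv h ∧ S.Eqv (f ≫ g ≫ h)
  path_obj : ∀ X : C, ∃ (PX : C) (r : X ⟶ PX) (s t : PX ⟶ X), IsPathObj S r s t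
  triv_fib_pb : ∀ {X Y Z P : C} (f : X ⟶ Z) (g : Y ⟶ Z) (p₁ : P ⟶ X) (p₂ : P ⟶ Y),
    S.Fib f → S.Eqv f → IsPB p₁ p₂ f g → S.Fib p₂ ∧ S.Eqv p₂
  triv_fib_sect : ∀ {X Y : C} (f : X ⟶ Y), S.Fib f → S.Eqv f → ∃ s : Y ⟶ X, s ≫ f = 𝟙 Y

/-- Two parallel maps are homotopic: `(f,g)` factors through some path object. -/
def Homotopic {Z X : C} (f g : Z ⟶ X) : Prop :=
  ∃ (PX : C) (r : X ⟶ PX) (s t : PX ⟶ X), IsPathObj S r s t ∧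
    ∃ H : Z ⟶ PX, H ≫ s = f ∧ H ≫ t = g

/-- `f` and `g` are fibrewise homotopic over the codomain of `p`:
`(f,g)` factors through some path object of `p` in the slice. -/
def FibHomotopic {Z X I : C} (p : X ⟶ I) (f g : Z ⟶ X) : Prop :=
  ∃ (PX : C) (r : X ⟶ PX) (s t : PX ⟶ X), IsRelPathObj S p r s t ∧
    ∃ H : Z ⟶ PX, H ≫ s = f ∧ H ≫ t = g

/-- `IsNTypeFib S n f` says that `f` is a fibration of `(n-2)`-types; so `n = 0`
corresponds to hlevel `-2` (trivial fibrations), `n = 1` to propositions,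
`n = 2` to sets and `n = 3` to groupoids. -/
def IsNTypeFib : ℕ → ∀ ⦃Y X : C⦄, (Y ⟶ X) → Prop
  | 0, _, _, f => S.Fib f ∧ S.Eqv f
  | n+1, Y, _, f => S.Fib f ∧ ∃ (PY W : C) (r : Y ⟶ PY) (s t : PY ⟶ Y)
      (π₁ π₂ : W ⟶ Y) (h : PY ⟶ W),
      IsRelPathObj S f r s t ∧ IsPB π₁ π₂ f f ∧ h ≫ π₁ = s ∧ h ≫ π₂ = t ∧
      IsNTypeFib n h

/-- The (strictly) commutative square with vertical fibrations `g` (left) and `f` (right),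
top `top` and bottom `bot`, is a homotopy pullback: the induced map to the actual
pullback is an equivalence. -/
def IsHomotopyPB {D Cc B A : C} (g : D ⟶ Cc) (top : D ⟶ B) (f : B ⟶ A) (bot : Cc ⟶ A) :
    Prop :=
  g ≫ bot = top ≫ f ∧ ∃ (P : C) (p₁ : P ⟶ Cc) (p₂ : P ⟶ B) (h : D ⟶ P),
    IsPB p₁ p₂ bot f ∧ h ≫ p₁ = g ∧ h ≫ p₂ = top ∧ S.Eqv h

/-- A transport structure on the fibration `p : Y ⟶ X`, relative to the path object
`(PX, r, s, t)` and the pullback `(Q, q₁, q₂)` of `s : PX ⟶ X` along `p`: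
a map `Γ : Y ×_X PX ⟶ Y` with `p ∘ Γ = t ∘ q₂` and `Γ ∘ (1_Y, r ∘ p) ≃_X 1_Y`. -/
def IsTransport {Y X PX Q : C} (p : Y ⟶ X) (r : X ⟶ PX) (s t : PX ⟶ X)
    (q₁ : Q ⟶ Y) (q₂ : Q ⟶ PX) (Γ : Q ⟶ Y) : Prop :=
  Γ ≫ p = q₂ ≫ t ∧
  ∀ j : Y ⟶ Q, j ≫ q₁ = 𝟙 Y → j ≫ q₂ = p ≫ r → FibHomotopic S p (j ≫ Γ) (𝟙 Y)

/-- A fibration `p : Y ⟶ X` is univalent: whenever `f, g : Z ⟶ X` and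
`w : f*p ⟶ g*p` is an equivalence over `Z`, there is a homotopy `H` from `f` to `g`
such that `w` is fibrewise homotopic over `Z` to the map induced by `H` and a
transport structure on `p`. -/
def Univalent {Y X : C} (p : Y ⟶ X) : Prop :=
  ∀ {Z Zf Zg : C} (f g : Z ⟶ X) (a₁ : Zf ⟶ Z) (a₂ : Zf ⟶ Y) (b₁ : Zg ⟶ Z) (b₂ : Zg ⟶ Y),
    IsPB a₁ a₂ f p → IsPB b₁ b₂ g p →
    ∀ w : Zf ⟶ Zg, w ≫ b₁ = a₁ → S.Eqv w →
    ∃ (PX Q : C) (r : X ⟶ PX) (s t : PX ⟶ X) (q₁ : Q ⟶ Y) (q₂ : Q ⟶ PX) (Γ : Q ⟶ Y)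
      (H : Z ⟶ PX) (k : Zf ⟶ Q) (w' : Zf ⟶ Zg),
      IsPathObj S r s t ∧ IsPB q₁ q₂ p s ∧ IsTransport S p r s t q₁ q₂ Γ ∧
      H ≫ s = f ∧ H ≫ t = g ∧
      k ≫ q₁ = a₂ ∧ k ≫ q₂ = a₁ ≫ H ∧
      w' ≫ b₁ = a₁ ∧ w' ≫ b₂ = k ≫ Γ ∧
      FibHomotopic S b₁ w w'

/-- `π : E ⟶ U` is a representation for the class `Small`: it is small, and every
small fibration is a homotopy pullback of it. -/
def IsRepresentation (Small : ∀ ⦃X Y : C⦄, (X ⟶ Y) → Prop) {E U : C} (π : E ⟶ U) : Prop :=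
  Small π ∧ ∀ ⦃B A : C⦄ (f : B ⟶ A), Small f →
    ∃ (c : A ⟶ U) (top : B ⟶ E), IsHomotopyPB S f top π c

/-- `M` is a good lift for the universal property of the homotopy Π-type
`(pE, u₁, u₂, ε)` of `g` along `f`, at the map `h : A ⟶ X` with chosen pullback
`(Ah, v₁, v₂)` of `h` along `f` and `m : f*h ⟶ g` over `Y`. -/
def HPiLiftGood {Y X Z E F A Ah : C} (f : Y ⟶ X) (g : Z ⟶ Y) (pE : E ⟶ X)
    (u₁ : F ⟶ E) (u₂ : F ⟶ Y) (ε : F ⟶ Z)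
    (h : A ⟶ X) (v₁ : Ah ⟶ A) (v₂ : Ah ⟶ Y) (m : Ah ⟶ Z) (M : A ⟶ E) : Prop :=
  M ≫ pE = h ∧ ∀ fM : Ah ⟶ F, fM ≫ u₁ = v₁ ≫ M → fM ≫ u₂ = v₂ →
    FibHomotopic S g (fM ≫ ε) m

/-- `(pE, u₁, u₂, ε)` is a homotopy Π-type of the fibration `g : Z ⟶ Y` along the
fibration `f : Y ⟶ X`.  Here `pE : E ⟶ X` is the Π-fibration, `(F, u₁, u₂)` is a
pullback of `pE` along `f`, and `ε : f*pE ⟶ g` is the counit (a map over `Y`). -/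
structure IsHPi {Y X Z E F : C} (f : Y ⟶ X) (g : Z ⟶ Y) (pE : E ⟶ X)
    (u₁ : F ⟶ E) (u₂ : F ⟶ Y) (ε : F ⟶ Z) : Prop where
  fib : S.Fib pE
  pb : IsPB u₁ u₂ pE f
  over' : ε ≫ g = u₂
  lift : ∀ {A Ah : C} (h : A ⟶ X) (v₁ : Ah ⟶ A) (v₂ : Ah ⟶ Y), IsPB v₁ v₂ h f →
    ∀ m : Ah ⟶ Z, m ≫ g = v₂ →
      ∃ M : A ⟶ E, HPiLiftGood S f g pE u₁ u₂ ε h v₁ v₂ m M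
  unique : ∀ {A Ah : C} (h : A ⟶ X) (v₁ : Ah ⟶ A) (v₂ : Ah ⟶ Y), IsPB v₁ v₂ h f →
    ∀ m : Ah ⟶ Z, m ≫ g = v₂ → ∀ M M' : A ⟶ E,
      HPiLiftGood S f g pE u₁ u₂ ε h v₁ v₂ m M →
      HPiLiftGood S f g pE u₁ u₂ ε h v₁ v₂ m M' →
      FibHomotopic S pE M M'

/-- The path category has homotopy Π-types. -/
def HasHPi : Prop := ∀ ⦃Y X Z : C⦄ (f : Y ⟶ X) (g : Z ⟶ Y), S.Fib f → S.Fib g →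
  ∃ (E F : C) (pE : E ⟶ X) (u₁ : F ⟶ E) (u₂ : F ⟶ Y) (ε : F ⟶ Z),
    IsHPi S f g pE u₁ u₂ ε

/-- A class of small fibrations: contained in the fibrations, containing all
isomorphisms, closed under composition and stable under homotopy pullback. -/
def IsSmallClass (Small : ∀ ⦃X Y : C⦄, (X ⟶ Y) → Prop) : Prop :=
  (∀ ⦃X Y : C⦄ (f : X ⟶ Y), Small f → S.Fib f) ∧
  (∀ ⦃X Y : C⦄ (f : X ⟶ Y), IsIso f → Small f) ∧
  (∀ ⦃X Y Z : C⦄ (f : X ⟶ Y) (g : Y ⟶ Z), Small f → Small g → Small (f ≫ g)) ∧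
  (∀ ⦃D Cc B A : C⦄ (g : D ⟶ Cc) (top : D ⟶ B) (f : B ⟶ A) (bot : Cc ⟶ A),
    S.Fib g → S.Fib f → Small f → IsHomotopyPB S g top f bot → Small g)

/-- The class `Small` is closed under homotopy Π-types along arbitrary fibrations:
it is impredicative (polymorphic). -/
def ClosedUnderHPi (Small : ∀ ⦃X Y : C⦄, (X ⟶ Y) → Prop) : Prop :=
  ∀ ⦃Y X Z : C⦄ (f : Y ⟶ X) (g : Z ⟶ Y), S.Fib f → Small g →
    ∀ ⦃E F : C⦄ (pE : E ⟶ X) (u₁ : F ⟶ E) (u₂ : F ⟶ Y) (ε : F ⟶ Z),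
      IsHPi S f g pE u₁ u₂ ε → Small pE

end PathCatDefs

end EffPaper
open CategoryTheory
namespace EffPaper
-- [assume p1 kit present]

/-! ### The category `EFF`. -/

/-- An object of `EFF`: a set `A`, a realizer function `α : A → ℕ`, sets of 1-cells
`hom a a' ⊆ ℕ`, and partial computable functions computing identity, inverse and
composite 1-cells from the realizers of the relevant data. -/
structure EffObj : Type 1 where
  A : Type
  α : A → ℕ
  hom : A → A → Set ℕ
  idc : CompFinds (fun a : A => α a) (fun a => hom a a)
  invc : CompFinds
    (fun x : {p : A × A × ℕ // p.2.2 ∈ hom p.1 p.2.1} =>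
      Nat.pair (α x.1.1) (Nat.pair (α x.1.2.1) x.1.2.2))
    (fun x => hom x.1.2.1 x.1.1)
  compc : CompFinds
    (fun x : {p : A × A × A × ℕ × ℕ //
        p.2.2.2.1 ∈ hom p.1 p.2.1 ∧ p.2.2.2.2 ∈ hom p.2.1 p.2.2.1} =>
      Nat.pair (α x.1.1) (Nat.pair (α x.1.2.1) (Nat.pair (α x.1.2.2.1)
        (Nat.pair x.1.2.2.2.1 x.1.2.2.2.2))))
    (fun x => hom x.1.1 x.1.2.2.1)

/-- The 1-cells of an object of `EFF` between `a` and `a'`. -/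
def EffObj.Cell (A : EffObj) (a a' : A.A) : Type := {n : ℕ // n ∈ A.hom a a'}

/-- A morphism of `EFF`: a function on 0-cells and functions on 1-cells, both
computably tracked. -/
structure EffHom (B A : EffObj) : Type where
  f0 : B.A → A.A
  f1 : ∀ b b' : B.A, B.Cell b b' → A.Cell (f0 b) (f0 b')
  tr0 : CompComputes (fun b : B.A => B.α b) (fun b => A.α (f0 b))
  tr1 : CompComputes
    (fun x : (b : B.A) × (b' : B.A) × B.Cell b b' =>
      Nat.pair (B.α x.1) (Nat.pair (B.α x.2.1) x.2.2.val))
    (fun x => (f1 x.1 x.2.1 x.2.2).val)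

instance : Category.{0} EffObj where
  Hom B A := EffHom B A
  id A :=
    { f0 := fun a => a
      f1 := fun _ _ π => π
      tr0 := CompComputes.id _
      tr1 := (CompComputes.projR _ _).comp (CompComputes.projR _ _) }
  comp {X Y Z} f g :=
    { f0 := fun b => g.f0 (f.f0 b)
      f1 := fun b b' π => g.f1 _ _ (f.f1 b b' π)
      tr0 := (g.tr0.precomp f.f0).comp f.tr0
      tr1 := by
        have hg := g.tr1.precomp
          (fun x : (b : X.A) × (b' : X.A) × X.Cell b b' =>
            (⟨f.f0 x.1, f.f0 x.2.1, f.f1 x.1 x.2.1 x.2.2⟩ :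
              (b : Y.A) × (b' : Y.A) × Y.Cell b b'))
        refine hg.comp ?_
        refine CompComputes.pair ?_ (CompComputes.pair ?_ f.tr1)
        · exact (f.tr0.precomp (fun x : (b : X.A) × (b' : X.A) × X.Cell b b' => x.1)).comp (CompComputes.projL _ _)
        · exact (f.tr0.precomp (fun x : (b : X.A) × (b' : X.A) × X.Cell b b' => x.2.1)).comp
            ((CompComputes.projL _ _).comp (CompComputes.projR _ _)) }

end EffPaper
namespace EffPaper
open CategoryTheory

/-! ### Homotopies, equivalences and fibrations in `EFF`. -/

/-- Two parallel maps in `EFF` are homotopic if there is a partial computable function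
computing, from the realizer of each `b`, a 1-cell from `f b` to `g b`. -/
def EffHomotopic {B A : EffObj} (f g : EffHom B A) : Prop :=
  CompFinds (fun b : B.A => B.α b) (fun b => A.hom (f.f0 b) (g.f0 b))

/-- A map in `EFF` is a (homotopy) equivalence if it has a homotopy inverse. -/
def EffEqv {B A : EffObj} (f : B ⟶ A) : Prop :=
  ∃ g : A ⟶ B, EffHomotopic (f ≫ g) (𝟙 B) ∧ EffHomotopic (g ≫ f) (𝟙 A)

/-- A map in `EFF` is a fibration: (i) 1-cells `π : f b → a` downstairs can be
computably lifted to 1-cells `ρ : b → b'` upstairs with `f b' = a`, `f ρ = π`;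
(ii) given `ρ ∈ ℬ(b,b')` and `π ∈ 𝒜(fb,fb')` one can compute `ρ' ∈ ℬ(b,b')`
with `f ρ' = π`. -/
def EffFib {B A : EffObj} (f : B ⟶ A) : Prop :=
  (∃ φ ψ : ℕ →. ℕ, Partrec φ ∧ Partrec ψ ∧
    ∀ (b : B.A) (a : A.A) (π : ℕ), π ∈ A.hom (f.f0 b) a →
      ∃ (b' : B.A) (ρ : B.Cell b b'),
        f.f0 b' = a ∧ (f.f1 b b' ρ).val = π ∧
        B.α b' ∈ φ (Nat.pair (B.α b) (Nat.pair (A.α a) π)) ∧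
        ρ.val ∈ ψ (Nat.pair (B.α b) (Nat.pair (A.α a) π))) ∧
  (∃ χ : ℕ →. ℕ, Partrec χ ∧
    ∀ (b b' : B.A) (ρ : B.Cell b b') (π : ℕ), π ∈ A.hom (f.f0 b) (f.f0 b') →
      ∃ ρ' : B.Cell b b', (f.f1 b b' ρ').val = π ∧
        ρ'.val ∈ χ (Nat.pair (B.α b) (Nat.pair (B.α b') (Nat.pair ρ.val π))))

/-- The path structure on `EFF`: fibrations and (homotopy) equivalences. -/
def EffPS : PathStruct EffObj where
  Fib := fun {_ _} f => EffFib f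
  Eqv := fun {_ _} f => EffEqv f

/-- A fibration in `EFF` is a standard discrete fibration if elements of the domain
are determined by their image and their realizer. -/
def EffStdDisc {B A : EffObj} (f : B ⟶ A) : Prop :=
  EffFib f ∧ ∀ b b' : B.A, f.f0 b = f.f0 b' → B.α b = B.α b' → b = b'

/-- A fibration in `EFF` is discrete if it can be written as a standard discrete
fibration after an equivalence. -/
def EffDisc {B A : EffObj} (f : B ⟶ A) : Prop :=
  EffFib f ∧ ∃ (B' : EffObj) (w : B ⟶ B') (g : B' ⟶ A),
    EffEqv w ∧ EffStdDisc g ∧ w ≫ g = f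

end EffPaper
namespace EffPaper
open CategoryTheory

/-! ### Propositional truncation in `EFF`, concretely. -/

/-- The propositional truncation of a map `f : B ⟶ A` in `EFF`: the object
`C := (B, β, 𝒞)` with `𝒞(b,b') = 𝒜(fb,fb')`. -/
def PropTrunc {B A : EffObj} (f : B ⟶ A) : EffObj where
  A := B.A
  α := B.α
  hom := fun b b' => A.hom (f.f0 b) (f.f0 b')
  idc := by
    obtain ⟨o, omem, occ⟩ := A.idc.toComputes
    exact ((occ.precomp f.f0).comp f.tr0).toFinds (fun b => omem (f.f0 b))
  invc := by
    obtain ⟨iv, ivmem, ivcc⟩ := A.invc.toComputes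
    set T := {p : B.A × B.A × ℕ // p.2.2 ∈ A.hom (f.f0 p.1) (f.f0 p.2.1)}
    let e : T → {p : A.A × A.A × ℕ // p.2.2 ∈ A.hom p.1 p.2.1} :=
      fun q => ⟨⟨f.f0 q.1.1, f.f0 q.1.2.1, q.1.2.2⟩, q.2⟩
    refine ((ivcc.precomp e).comp ?_).toFinds (fun q => ivmem (e q))
    refine CompComputes.pair ?_ (CompComputes.pair ?_ ?_)
    · exact (f.tr0.precomp (fun q : T => q.1.1)).comp (CompComputes.projL _ _)
    · exact (f.tr0.precomp (fun q : T => q.1.2.1)).comp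
        ((CompComputes.projL _ _).comp (CompComputes.projR _ _))
    · exact (CompComputes.projR _ _).comp (CompComputes.projR _ _)
  compc := by
    obtain ⟨cp, cpmem, cpcc⟩ := A.compc.toComputes
    set T := {p : B.A × B.A × B.A × ℕ × ℕ //
      p.2.2.2.1 ∈ A.hom (f.f0 p.1) (f.f0 p.2.1) ∧
      p.2.2.2.2 ∈ A.hom (f.f0 p.2.1) (f.f0 p.2.2.1)}
    let e : T → {p : A.A × A.A × A.A × ℕ × ℕ //
        p.2.2.2.1 ∈ A.hom p.1 p.2.1 ∧ p.2.2.2.2 ∈ A.hom p.2.1 p.2.2.1} :=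
      fun q => ⟨⟨f.f0 q.1.1, f.f0 q.1.2.1, f.f0 q.1.2.2.1, q.1.2.2.2.1, q.1.2.2.2.2⟩, q.2⟩
    refine ((cpcc.precomp e).comp ?_).toFinds (fun q => cpmem (e q))
    refine CompComputes.pair ?_ (CompComputes.pair ?_ (CompComputes.pair ?_ ?_))
    · exact (f.tr0.precomp (fun q : T => q.1.1)).comp (CompComputes.projL _ _)
    · exact (f.tr0.precomp (fun q : T => q.1.2.1)).comp
        ((CompComputes.projL _ _).comp (CompComputes.projR _ _))
    · exact (f.tr0.precomp (fun q : T => q.1.2.2.1)).comp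
        ((CompComputes.projL _ _).comp
          ((CompComputes.projR _ _).comp (CompComputes.projR _ _)))
    · exact (CompComputes.projR _ _).comp
        ((CompComputes.projR _ _).comp (CompComputes.projR _ _))

/-- The unit `B ⟶ ‖B‖_A` of the propositional truncation. -/
def PropTruncUnit {B A : EffObj} (f : B ⟶ A) : B ⟶ PropTrunc f where
  f0 := fun b => b
  f1 := fun b b' π => ⟨(f.f1 b b' π).val, (f.f1 b b' π).2⟩
  tr0 := CompComputes.id _
  tr1 := f.tr1

/-- The propositional fibration `‖B‖_A ⟶ A` through which `f` factors. -/
def PropTruncProj {B A : EffObj} (f : B ⟶ A) : PropTrunc f ⟶ A where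
  f0 := f.f0
  f1 := fun _ _ π => ⟨π.val, π.2⟩
  tr0 := f.tr0
  tr1 := (CompComputes.projR _ _).comp (CompComputes.projR _ _)

end EffPaper
/-!
In `EFF` a fibration `p : X ⟶ I` is propositional exactly when its fibres are computably
connected: from the codes of `x, x'` with `p x = p x'` one can compute a cell `x → x'`.
Indeed, the fibrewise path object `P_I(X)` of `p` (cells inside fibres) maps to the kernel
pair `X ×_I X` by a fibration, and connecting cells give a section of it that is a homotopy
inverse. Conversely, a section of this trivial fibration picks for each pair `(x, x')` a
point of `P_I(X)`, whose endpoints are joined by a computable cell because `s` and `t` are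
both retractions of the equivalence `X → P_I(X)`.

The projection `C ⟶ A` with `𝒞(b,b') = 𝒜(fb,fb')` is connected via identity cells of `A`.
Over a connected fibration `h' : C' ⟶ A`, each cell `π` of `A` from `h'c` to `h'c'` is the
image of a cell `c → c'` computable from `π` (lift `π`, connect inside the fibre, adjust);
this gives `d`. Any two maps over `A` into `C'` are fibrewise homotopic via connecting cells,
which gives both `d ∘ g ≃_A g'` and uniqueness.
-/

namespace EffPaper

namespace CompComputes

variable {T : Sort*} {I a b : T → ℕ}

protected theorem fst (h : CompComputes I fun t => Nat.pair (a t) (b t)) : CompComputes I a :=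
  (CompComputes.projL a b).comp h

protected theorem snd (h : CompComputes I fun t => Nat.pair (a t) (b t)) : CompComputes I b :=
  (CompComputes.projR a b).comp h

protected theorem unpair_fst (h : CompComputes I a) : CompComputes I fun t => (a t).unpair.1 :=
  (CompComputes.unpairL a).comp h

protected theorem unpair_snd (h : CompComputes I a) : CompComputes I fun t => (a t).unpair.2 :=
  (CompComputes.unpairR a).comp h

end CompComputes

namespace EffObj

variable (X : EffObj)

noncomputable def idCell (a : X.A) : X.Cell a a :=
  ⟨X.idc.toComputes.choose a, X.idc.toComputes.choose_spec.1 a⟩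

noncomputable def invCell {a a' : X.A} (c : X.Cell a a') : X.Cell a' a :=
  ⟨X.invc.toComputes.choose ⟨(a, a', c.val), c.2⟩,
    X.invc.toComputes.choose_spec.1 ⟨(a, a', c.val), c.2⟩⟩

noncomputable def compCell {a a' a'' : X.A} (c : X.Cell a a') (c' : X.Cell a' a'') :
    X.Cell a a'' :=
  ⟨X.compc.toComputes.choose ⟨(a, a', a'', c.val, c'.val), c.2, c'.2⟩,
    X.compc.toComputes.choose_spec.1 ⟨(a, a', a'', c.val, c'.val), c.2, c'.2⟩⟩

variable {X} {T : Sort*} {I : T → ℕ} {x y z : T → X.A}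

theorem computes_idCell (cx : CompComputes I fun t => X.α (x t)) :
    CompComputes I fun t => (X.idCell (x t)).val :=
  (X.idc.toComputes.choose_spec.2.precomp x).comp cx

theorem computes_invCell {c : ∀ t, X.Cell (x t) (y t)}
    (cx : CompComputes I fun t => X.α (x t)) (cy : CompComputes I fun t => X.α (y t))
    (cc : CompComputes I fun t => (c t).val) :
    CompComputes I fun t => (X.invCell (c t)).val :=
  (X.invc.toComputes.choose_spec.2.precomp fun t => ⟨(x t, y t, (c t).val), (c t).2⟩).comp
    (cx.pair (cy.pair cc))

theorem computes_compCell {c : ∀ t, X.Cell (x t) (y t)} {c' : ∀ t, X.Cell (y t) (z t)}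
    (cx : CompComputes I fun t => X.α (x t)) (cy : CompComputes I fun t => X.α (y t))
    (cz : CompComputes I fun t => X.α (z t))
    (cc : CompComputes I fun t => (c t).val) (cc' : CompComputes I fun t => (c' t).val) :
    CompComputes I fun t => (X.compCell (c t) (c' t)).val :=
  (X.compc.toComputes.choose_spec.2.precomp fun t =>
      ⟨(x t, y t, z t, (c t).val, (c' t).val), (c t).2, (c' t).2⟩).comp
    (cx.pair (cy.pair (cz.pair (cc.pair cc'))))

def Cell.cast {a b a' b' : X.A} (c : X.Cell a b) (ha : a = a') (hb : b = b') : X.Cell a' b' :=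
  ⟨c.val, ha ▸ hb ▸ c.2⟩

def induced (Y : EffObj) {Z : Type} (β : Z → ℕ) (e : Z → Y.A)
    (ce : CompComputes β fun z => Y.α (e z)) : EffObj where
  A := Z
  α := β
  hom z z' := Y.hom (e z) (e z')
  idc := Y.idc.via e ce
  invc := by
    let Ix := {t : Z × Z × ℕ // t.2.2 ∈ Y.hom (e t.1) (e t.2.1)}
    have cin := CompComputes.id fun t : Ix => Nat.pair (β t.1.1) (Nat.pair (β t.1.2.1) t.1.2.2)
    exact Y.invc.via (fun t : Ix => ⟨(e t.1.1, e t.1.2.1, t.1.2.2), t.2⟩)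
      (((ce.precomp _).comp cin.fst).pair (((ce.precomp _).comp cin.snd.fst).pair cin.snd.snd))
  compc := by
    let Ix := {t : Z × Z × Z × ℕ × ℕ //
      t.2.2.2.1 ∈ Y.hom (e t.1) (e t.2.1) ∧ t.2.2.2.2 ∈ Y.hom (e t.2.1) (e t.2.2.1)}
    have cin := CompComputes.id fun t : Ix =>
      Nat.pair (β t.1.1) (Nat.pair (β t.1.2.1) (Nat.pair (β t.1.2.2.1)
        (Nat.pair t.1.2.2.2.1 t.1.2.2.2.2)))
    exact Y.compc.via
      (fun t : Ix => ⟨(e t.1.1, e t.1.2.1, e t.1.2.2.1, t.1.2.2.2.1, t.1.2.2.2.2), t.2⟩)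
      (((ce.precomp _).comp cin.fst).pair (((ce.precomp _).comp cin.snd.fst).pair
        (((ce.precomp _).comp cin.snd.snd.fst).pair cin.snd.snd.snd)))

def inducedHom (Y : EffObj) {Z : Type} (β : Z → ℕ) (e : Z → Y.A)
    (ce : CompComputes β fun z => Y.α (e z)) : Y.induced β e ce ⟶ Y where
  f0 := e
  f1 _ _ c := c
  tr0 := ce
  tr1 := (CompComputes.id _).snd.snd

end EffObj

namespace EffHom

variable {B A : EffObj}

theorem hom_ext {f g : EffHom B A} (h0 : ∀ b, f.f0 b = g.f0 b)
    (h1 : ∀ b b' (ρ : B.Cell b b'), (f.f1 b b' ρ).val = (g.f1 b b' ρ).val) : f = g := by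
  cases f with | mk f0 f1 =>
  cases g with | mk g0 g1 =>
  obtain rfl : f0 = g0 := funext h0
  obtain rfl : f1 = g1 := funext fun b => funext fun b' => funext fun ρ => Subtype.ext (h1 b b' ρ)
  rfl

theorem f0_congr {f g : B ⟶ A} (h : f = g) (b : B.A) : f.f0 b = g.f0 b := by
  rw [h]

theorem f1_congr {f g : B ⟶ A} (h : f = g) (b b' : B.A) (ρ : B.Cell b b') :
    (f.f1 b b' ρ).val = (g.f1 b b' ρ).val := by
  subst h; rfl

variable {T : Sort*} {I : T → ℕ} {x y : T → B.A}

theorem computes_f0 (f : B ⟶ A) (cx : CompComputes I fun t => B.α (x t)) :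
    CompComputes I fun t => A.α (f.f0 (x t)) :=
  (f.tr0.precomp x).comp cx

theorem computes_f1 (f : B ⟶ A) {c : ∀ t, B.Cell (x t) (y t)}
    (cx : CompComputes I fun t => B.α (x t)) (cy : CompComputes I fun t => B.α (y t))
    (cc : CompComputes I fun t => (c t).val) :
    CompComputes I fun t => (f.f1 _ _ (c t)).val :=
  (f.tr1.precomp fun t => ⟨x t, y t, c t⟩).comp (cx.pair (cy.pair cc))

end EffHom

theorem effHomotopic_of_f0_eq {B A : EffObj} {f g : B ⟶ A} (h : ∀ b, f.f0 b = g.f0 b) :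
    EffHomotopic f g :=
  (A.computes_idCell (f.computes_f0 (CompComputes.id _))).toFinds fun b =>
    ((A.idCell (f.f0 b)).cast rfl (h b)).2

theorem EffEqv.exists_cell_of_retractions {P X : EffObj} {r : X ⟶ P} {s t : P ⟶ X}
    (hr : EffEqv r) (hs : r ≫ s = 𝟙 X) (ht : r ≫ t = 𝟙 X) :
    ∃ η : ∀ q : P.A, X.Cell (s.f0 q) (t.f0 q), CompComputes P.α fun q => (η q).val := by
  obtain ⟨r', -, hr'⟩ := hr
  obtain ⟨μ, hμ, cμ⟩ := hr'.toComputes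
  let sμ (q : P.A) : X.Cell (r'.f0 q) (s.f0 q) :=
    (s.f1 _ _ ⟨μ q, hμ q⟩).cast (EffHom.f0_congr hs _) rfl
  let tμ (q : P.A) : X.Cell (r'.f0 q) (t.f0 q) :=
    (t.f1 _ _ ⟨μ q, hμ q⟩).cast (EffHom.f0_congr ht _) rfl
  refine ⟨fun q => X.compCell (X.invCell (sμ q)) (tμ q), ?_⟩
  have cin := CompComputes.id P.α
  have cr' := r'.computes_f0 cin
  have crr' := r.computes_f0 cr'
  exact X.computes_compCell (s.computes_f0 cin) cr' (t.computes_f0 cin)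
    (X.computes_invCell cr' (s.computes_f0 cin) (s.computes_f1 crr' cin cμ))
    (t.computes_f1 crr' cin cμ)

section Fibrations

variable {B A : EffObj}

abbrev LiftIx (f : B ⟶ A) : Type := (b : B.A) × (a : A.A) × A.Cell (f.f0 b) a

abbrev LiftIx.code {f : B ⟶ A} (t : LiftIx f) : ℕ :=
  Nat.pair (B.α t.1) (Nat.pair (A.α t.2.1) t.2.2.val)

abbrev AdjustIx (f : B ⟶ A) : Type :=
  (b : B.A) × (b' : B.A) × B.Cell b b' × A.Cell (f.f0 b) (f.f0 b')

abbrev AdjustIx.code {f : B ⟶ A} (t : AdjustIx f) : ℕ :=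
  Nat.pair (B.α t.1) (Nat.pair (B.α t.2.1) (Nat.pair t.2.2.1.val t.2.2.2.val))

theorem effFib_iff {f : B ⟶ A} : EffFib f ↔
    (∃ (obj : LiftIx f → B.A) (cell : ∀ t : LiftIx f, B.Cell t.1 (obj t)),
      (∀ t, f.f0 (obj t) = t.2.1) ∧ (∀ t, (f.f1 _ _ (cell t)).val = t.2.2.val) ∧
      CompComputes LiftIx.code (fun t => B.α (obj t)) ∧
      CompComputes LiftIx.code (fun t => (cell t).val)) ∧
    (∃ adj : ∀ t : AdjustIx f, B.Cell t.1 t.2.1,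
      (∀ t, (f.f1 _ _ (adj t)).val = t.2.2.2.val) ∧
      CompComputes AdjustIx.code (fun t => (adj t).val)) := by
  constructor
  · rintro ⟨⟨φ, ψ, pφ, pψ, hlift⟩, χ, pχ, hadj⟩
    choose obj cell h_obj h_cell c_obj c_cell using
      fun t : LiftIx f => hlift t.1 t.2.1 t.2.2.val t.2.2.2
    choose adj h_adj c_adj using
      fun t : AdjustIx f => hadj t.1 t.2.1 t.2.2.1 t.2.2.2.val t.2.2.2.2
    exact ⟨⟨obj, cell, h_obj, h_cell, ⟨φ, pφ, c_obj⟩, ⟨ψ, pψ, c_cell⟩⟩,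
      adj, h_adj, χ, pχ, c_adj⟩
  · rintro ⟨⟨obj, cell, h_obj, h_cell, ⟨φ, pφ, c_obj⟩, ⟨ψ, pψ, c_cell⟩⟩,
      adj, h_adj, χ, pχ, c_adj⟩
    refine ⟨⟨φ, ψ, pφ, pψ, fun b a π hπ => ?_⟩, χ, pχ, fun b b' ρ π hπ => ?_⟩
    · let t : LiftIx f := ⟨b, a, π, hπ⟩
      exact ⟨obj t, cell t, h_obj t, h_cell t, c_obj t, c_cell t⟩
    · let t : AdjustIx f := ⟨b, b', ρ, π, hπ⟩
      exact ⟨adj t, h_adj t, c_adj t⟩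

namespace EffFib

variable {f : B ⟶ A} (hf : EffFib f)

noncomputable def liftObj (b : B.A) {a : A.A} (π : A.Cell (f.f0 b) a) : B.A :=
  (effFib_iff.1 hf).1.choose ⟨b, a, π⟩

noncomputable def liftCell (b : B.A) {a : A.A} (π : A.Cell (f.f0 b) a) :
    B.Cell b (hf.liftObj b π) :=
  (effFib_iff.1 hf).1.choose_spec.choose ⟨b, a, π⟩

noncomputable def adjust {b b' : B.A} (ρ : B.Cell b b') (π : A.Cell (f.f0 b) (f.f0 b')) :
    B.Cell b b' :=
  (effFib_iff.1 hf).2.choose ⟨b, b', ρ, π⟩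

theorem f0_liftObj (b : B.A) {a : A.A} (π : A.Cell (f.f0 b) a) : f.f0 (hf.liftObj b π) = a :=
  (effFib_iff.1 hf).1.choose_spec.choose_spec.1 ⟨b, a, π⟩

theorem f1_adjust {b b' : B.A} (ρ : B.Cell b b') (π : A.Cell (f.f0 b) (f.f0 b')) :
    (f.f1 _ _ (hf.adjust ρ π)).val = π.val :=
  (effFib_iff.1 hf).2.choose_spec.1 ⟨b, b', ρ, π⟩

variable {T : Sort*} {I : T → ℕ} {b b' : T → B.A}

theorem computes_liftObj {a : T → A.A} {π : ∀ t, A.Cell (f.f0 (b t)) (a t)}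
    (cb : CompComputes I fun t => B.α (b t)) (ca : CompComputes I fun t => A.α (a t))
    (cπ : CompComputes I fun t => (π t).val) :
    CompComputes I fun t => B.α (hf.liftObj (b t) (π t)) :=
  ((effFib_iff.1 hf).1.choose_spec.choose_spec.2.2.1.precomp fun t => ⟨b t, a t, π t⟩).comp
    (cb.pair (ca.pair cπ))

theorem computes_liftCell {a : T → A.A} {π : ∀ t, A.Cell (f.f0 (b t)) (a t)}
    (cb : CompComputes I fun t => B.α (b t)) (ca : CompComputes I fun t => A.α (a t))
    (cπ : CompComputes I fun t => (π t).val) :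
    CompComputes I fun t => (hf.liftCell (b t) (π t)).val :=
  ((effFib_iff.1 hf).1.choose_spec.choose_spec.2.2.2.precomp fun t => ⟨b t, a t, π t⟩).comp
    (cb.pair (ca.pair cπ))

theorem computes_adjust {ρ : ∀ t, B.Cell (b t) (b' t)}
    {π : ∀ t, A.Cell (f.f0 (b t)) (f.f0 (b' t))}
    (cb : CompComputes I fun t => B.α (b t)) (cb' : CompComputes I fun t => B.α (b' t))
    (cρ : CompComputes I fun t => (ρ t).val) (cπ : CompComputes I fun t => (π t).val) :
    CompComputes I fun t => (hf.adjust (ρ t) (π t)).val :=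
  ((effFib_iff.1 hf).2.choose_spec.2.precomp fun t => ⟨b t, b' t, ρ t, π t⟩).comp
    (cb.pair (cb'.pair (cρ.pair cπ)))

theorem exists_section_of_effEqv {P W : EffObj} {k : P ⟶ W} (hk : EffFib k)
    (hke : EffEqv k) :
    ∃ n : W.A → P.A, (∀ w, k.f0 (n w) = w) ∧ CompComputes W.α fun w => P.α (n w) := by
  obtain ⟨e, -, he⟩ := hke
  obtain ⟨θ, hθ, cθ⟩ := he.toComputes
  have cin := CompComputes.id W.α
  exact ⟨fun w => hk.liftObj (e.f0 w) ⟨θ w, hθ w⟩, fun w => hk.f0_liftObj _ _,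
    hk.computes_liftObj (e.computes_f0 cin) cin cθ⟩

end EffFib

end Fibrations

section KernelPair

variable {X I : EffObj} {p : X ⟶ I}

/-- Codes `Nat.pair u v` of pairs of cells `u : x → y`, `v : x' → y'` with `p u = p v` as
codes. -/
def pairHom (p : X ⟶ I) (x x' y y' : X.A) : Set ℕ :=
  {n | ∃ (h : n.unpair.1 ∈ X.hom x y) (h' : n.unpair.2 ∈ X.hom x' y'),
      (p.f1 x y ⟨n.unpair.1, h⟩).val = (p.f1 x' y' ⟨n.unpair.2, h'⟩).val}

namespace pairHom

variable {x x' y y' : X.A} {n : ℕ}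

def fst (h : n ∈ pairHom p x x' y y') : X.Cell x y := ⟨n.unpair.1, Exists.fst h⟩

def snd (h : n ∈ pairHom p x x' y y') : X.Cell x' y' := ⟨n.unpair.2, (Exists.snd h).fst⟩

theorem f1_fst_eq (h : n ∈ pairHom p x x' y y') :
    (p.f1 _ _ (fst h)).val = (p.f1 _ _ (snd h)).val :=
  (Exists.snd h).snd

theorem pair_mem (u : X.Cell x y) (v : X.Cell x' y')
    (huv : (p.f1 _ _ u).val = (p.f1 _ _ v).val) :
    Nat.pair u.val v.val ∈ pairHom p x x' y y' := by
  obtain ⟨u, hu⟩ := u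
  obtain ⟨v, hv⟩ := v
  exact ⟨by simpa using hu, by simpa using hv, by simpa using huv⟩

end pairHom

section AdjustPair

variable (hp : EffFib p)

/-- Cell codes are not functorial, so `(u, v)` lies in `pairHom` only after `v` is moved,
by condition (ii) on the fibration `p`, over the image of `u`. -/
noncomputable def adjustPair {x x' y y' : X.A} (u : X.Cell x y) (v : X.Cell x' y')
    (hx : p.f0 x = p.f0 x') (hy : p.f0 y = p.f0 y') : ℕ :=
  Nat.pair u.val (hp.adjust v ((p.f1 _ _ u).cast hx hy)).val

theorem adjustPair_mem {x x' y y' : X.A} (u : X.Cell x y) (v : X.Cell x' y')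
    (hx : p.f0 x = p.f0 x') (hy : p.f0 y = p.f0 y') :
    adjustPair hp u v hx hy ∈ pairHom p x x' y y' :=
  pairHom.pair_mem _ _ (hp.f1_adjust v ((p.f1 _ _ u).cast hx hy)).symm

theorem computes_adjustPair {T : Sort*} {J : T → ℕ} {x x' y y' : T → X.A}
    {u : ∀ t, X.Cell (x t) (y t)} {v : ∀ t, X.Cell (x' t) (y' t)}
    (hx : ∀ t, p.f0 (x t) = p.f0 (x' t)) (hy : ∀ t, p.f0 (y t) = p.f0 (y' t))
    (cx : CompComputes J fun t => X.α (x t)) (cx' : CompComputes J fun t => X.α (x' t))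
    (cy : CompComputes J fun t => X.α (y t)) (cy' : CompComputes J fun t => X.α (y' t))
    (cu : CompComputes J fun t => (u t).val) (cv : CompComputes J fun t => (v t).val) :
    CompComputes J fun t => adjustPair hp (u t) (v t) (hx t) (hy t) :=
  cu.pair (hp.computes_adjust cx' cy' cv (p.computes_f1 cx cy cu))

end AdjustPair

abbrev FibrePair (p : X ⟶ I) : Type := {q : X.A × X.A // p.f0 q.1 = p.f0 q.2}

def kernelPair (hp : EffFib p) : EffObj where
  A := FibrePair p
  α q := Nat.pair (X.α q.1.1) (X.α q.1.2)
  hom q q' := pairHom p q.1.1 q.1.2 q'.1.1 q'.1.2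
  idc := by
    have cin := CompComputes.id fun q : FibrePair p => Nat.pair (X.α q.1.1) (X.α q.1.2)
    refine CompComputes.toFinds
      (o := fun q => adjustPair hp (X.idCell q.1.1) (X.idCell q.1.2) q.2 q.2) ?_
      fun q => adjustPair_mem hp _ _ _ _
    exact computes_adjustPair hp _ _ cin.fst cin.snd cin.fst cin.snd
      (X.computes_idCell cin.fst) (X.computes_idCell cin.snd)
  invc := by
    let Ix := {t : FibrePair p × FibrePair p × ℕ //
      t.2.2 ∈ pairHom p t.1.1.1 t.1.1.2 t.2.1.1.1 t.2.1.1.2}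
    have cin := CompComputes.id fun t : Ix =>
      Nat.pair (Nat.pair (X.α t.1.1.1.1) (X.α t.1.1.1.2))
        (Nat.pair (Nat.pair (X.α t.1.2.1.1.1) (X.α t.1.2.1.1.2)) t.1.2.2)
    refine CompComputes.toFinds (o := fun t => adjustPair hp
        (X.invCell (pairHom.fst t.2)) (X.invCell (pairHom.snd t.2)) t.1.2.1.2 t.1.1.2) ?_
      fun t => adjustPair_mem hp _ _ _ _
    have cn := cin.snd.snd
    have ca := cin.fst
    have cb := cin.snd.fst
    exact computes_adjustPair hp _ _ cb.fst cb.snd ca.fst ca.snd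
      (X.computes_invCell ca.fst cb.fst cn.unpair_fst)
      (X.computes_invCell ca.snd cb.snd cn.unpair_snd)
  compc := by
    let Ix := {t : FibrePair p × FibrePair p × FibrePair p × ℕ × ℕ //
      t.2.2.2.1 ∈ pairHom p t.1.1.1 t.1.1.2 t.2.1.1.1 t.2.1.1.2 ∧
      t.2.2.2.2 ∈ pairHom p t.2.1.1.1 t.2.1.1.2 t.2.2.1.1.1 t.2.2.1.1.2}
    have cin := CompComputes.id fun t : Ix =>
      Nat.pair (Nat.pair (X.α t.1.1.1.1) (X.α t.1.1.1.2))
        (Nat.pair (Nat.pair (X.α t.1.2.1.1.1) (X.α t.1.2.1.1.2))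
          (Nat.pair (Nat.pair (X.α t.1.2.2.1.1.1) (X.α t.1.2.2.1.1.2))
            (Nat.pair t.1.2.2.2.1 t.1.2.2.2.2)))
    refine CompComputes.toFinds (o := fun t => adjustPair hp
        (X.compCell (pairHom.fst t.2.1) (pairHom.fst t.2.2))
        (X.compCell (pairHom.snd t.2.1) (pairHom.snd t.2.2)) t.1.1.2 t.1.2.2.1.2) ?_
      fun t => adjustPair_mem hp _ _ _ _
    have ca := cin.fst
    have cb := cin.snd.fst
    have cc := cin.snd.snd.fst
    have cn := cin.snd.snd.snd.fst
    have cm := cin.snd.snd.snd.snd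
    exact computes_adjustPair hp _ _ ca.fst ca.snd cc.fst cc.snd
      (X.computes_compCell ca.fst cb.fst cc.fst cn.unpair_fst cm.unpair_fst)
      (X.computes_compCell ca.snd cb.snd cc.snd cn.unpair_snd cm.unpair_snd)

namespace kernelPair

variable (hp : EffFib p)

def fst : kernelPair hp ⟶ X where
  f0 q := q.1.1
  f1 _ _ n := pairHom.fst n.2
  tr0 := (CompComputes.id _).fst
  tr1 := (CompComputes.id _).snd.snd.unpair_fst

def snd : kernelPair hp ⟶ X where
  f0 q := q.1.2
  f1 _ _ n := pairHom.snd n.2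
  tr0 := (CompComputes.id _).snd
  tr1 := (CompComputes.id _).snd.snd.unpair_snd

theorem fst_comp_eq_snd_comp : fst hp ≫ p = snd hp ≫ p :=
  EffHom.hom_ext (fun q => q.2) fun _ _ n => pairHom.f1_fst_eq n.2

variable {hp}

def lift {Q : EffObj} (q₁ q₂ : Q ⟶ X) (h : q₁ ≫ p = q₂ ≫ p) :
    Q ⟶ kernelPair hp where
  f0 z := ⟨(q₁.f0 z, q₂.f0 z), EffHom.f0_congr h z⟩
  f1 z z' ρ := ⟨Nat.pair (q₁.f1 z z' ρ).val (q₂.f1 z z' ρ).val,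
    pairHom.pair_mem _ _ (EffHom.f1_congr h z z' ρ)⟩
  tr0 := q₁.tr0.pair q₂.tr0
  tr1 := q₁.tr1.pair q₂.tr1

theorem isPB : IsPB (fst hp) (snd hp) p p := by
  refine ⟨fst_comp_eq_snd_comp hp,
    fun _ q₁ q₂ h => ⟨lift q₁ q₂ h, ⟨?_, ?_⟩, ?_⟩⟩
  · exact EffHom.hom_ext (fun _ => rfl) fun _ _ _ => congrArg Prod.fst (Nat.unpair_pair _ _)
  · exact EffHom.hom_ext (fun _ => rfl) fun _ _ _ => congrArg Prod.snd (Nat.unpair_pair _ _)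
  · rintro u ⟨rfl, rfl⟩
    exact EffHom.hom_ext (fun _ => rfl) fun _ _ _ => (Nat.pair_unpair _).symm

end kernelPair

end KernelPair

section PathObject

variable {X I : EffObj} {p : X ⟶ I}

/-- Points of the fibrewise path object: a cell `σ : x → y` with `p x = p y`. -/
abbrev FibrePath (p : X ⟶ I) : Type :=
  {q : X.A × X.A × ℕ // q.2.2 ∈ X.hom q.1 q.2.1 ∧ p.f0 q.1 = p.f0 q.2.1}

def FibrePath.ends (q : FibrePath p) : FibrePair p := ⟨(q.1.1, q.1.2.1), q.2.2⟩

theorem computes_fibrePath_ends :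
    CompComputes (fun q : FibrePath p => Nat.pair (X.α q.1.1) (Nat.pair (X.α q.1.2.1) q.1.2.2))
      fun q => Nat.pair (X.α q.1.1) (X.α q.1.2.1) :=
  (CompComputes.id _).fst.pair (CompComputes.id _).snd.fst

def pathObj (hp : EffFib p) : EffObj :=
  (kernelPair hp).induced _ FibrePath.ends computes_fibrePath_ends

namespace pathObj

variable (hp : EffFib p)

def toKernelPair : pathObj hp ⟶ kernelPair hp := EffObj.inducedHom _ _ _ _

def src : pathObj hp ⟶ X := toKernelPair hp ≫ kernelPair.fst hp

def tgt : pathObj hp ⟶ X := toKernelPair hp ≫ kernelPair.snd hp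

noncomputable def refl : X ⟶ pathObj hp where
  f0 x := ⟨(x, x, (X.idCell x).val), (X.idCell x).2, rfl⟩
  f1 _ _ ρ := ⟨Nat.pair ρ.val ρ.val, pairHom.pair_mem ρ ρ rfl⟩
  tr0 := (CompComputes.id _).pair
    ((CompComputes.id _).pair (X.computes_idCell (CompComputes.id _)))
  tr1 := (CompComputes.id _).snd.snd.pair (CompComputes.id _).snd.snd

theorem refl_src : refl hp ≫ src hp = 𝟙 X :=
  EffHom.hom_ext (fun _ => rfl) fun _ _ _ => congrArg Prod.fst (Nat.unpair_pair _ _)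

theorem refl_tgt : refl hp ≫ tgt hp = 𝟙 X :=
  EffHom.hom_ext (fun _ => rfl) fun _ _ _ => congrArg Prod.snd (Nat.unpair_pair _ _)

theorem src_comp_eq_tgt_comp : src hp ≫ p = tgt hp ≫ p := by
  rw [src, tgt, Category.assoc, Category.assoc, kernelPair.fst_comp_eq_snd_comp]

theorem effEqv_refl : EffEqv (refl hp) := by
  refine ⟨src hp, effHomotopic_of_f0_eq fun _ => rfl, ?_⟩
  have cin := CompComputes.id (pathObj hp).α
  have cx : CompComputes (pathObj hp).α fun q => X.α q.1.1 := cin.fst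
  refine CompComputes.toFinds (o := fun q : FibrePath p =>
      adjustPair hp (X.idCell q.1.1) ⟨q.1.2.2, q.2.1⟩ rfl q.2.2) ?_
    fun q => adjustPair_mem hp _ _ _ _
  exact computes_adjustPair hp _ _ cx cx cx cin.snd.fst (X.computes_idCell cx) cin.snd.snd

theorem effFib_toKernelPair : EffFib (toKernelPair hp) := by
  refine effFib_iff.2 ⟨?_, fun t => t.2.2.2, fun _ => rfl, (CompComputes.id _).snd.snd.snd⟩
  -- a path `σ : x → y` moved along `(u, v) : (x, y) → (a, a')` becomes `v ∘ σ ∘ u⁻¹`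
  let σ' (t : LiftIx (toKernelPair hp)) : X.Cell t.2.1.1.1 t.2.1.1.2 :=
    X.compCell (X.compCell (X.invCell (pairHom.fst t.2.2.2)) ⟨t.1.1.2.2, t.1.2.1⟩)
      (pairHom.snd t.2.2.2)
  refine ⟨fun t => ⟨(t.2.1.1.1, t.2.1.1.2, (σ' t).val), (σ' t).2, t.2.1.2⟩, fun t => t.2.2,
    fun _ => rfl, fun _ => rfl, ?_, (CompComputes.id _).snd.snd⟩
  have cin := CompComputes.id (LiftIx.code (f := toKernelPair hp))
  have cx := cin.fst.fst
  have cy := cin.fst.snd.fst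
  have ca := cin.snd.fst.fst
  have ca' := cin.snd.fst.snd
  have cn := cin.snd.snd
  exact ca.pair (ca'.pair (X.computes_compCell ca cy ca'
    (X.computes_compCell ca cx cy (X.computes_invCell cx ca cn.unpair_fst) cin.fst.snd.snd)
    cn.unpair_snd))

theorem isRelPathObj : IsRelPathObj EffPS p (refl hp) (src hp) (tgt hp) :=
  ⟨effEqv_refl hp, refl_src hp, refl_tgt hp, src_comp_eq_tgt_comp hp, kernelPair hp,
    kernelPair.fst hp, kernelPair.snd hp, toKernelPair hp, kernelPair.isPB, rfl, rfl,
    effFib_toKernelPair hp⟩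

end pathObj

theorem fibHomotopic_of_cells (hp : EffFib p) {Z : EffObj} {u v : Z ⟶ X}
    (huv : u ≫ p = v ≫ p) (η : ∀ z, X.Cell (u.f0 z) (v.f0 z))
    (cη : CompComputes Z.α fun z => (η z).val) : FibHomotopic EffPS p u v := by
  let H : Z ⟶ pathObj hp :=
    { f0 := fun z => ⟨(u.f0 z, v.f0 z, (η z).val), (η z).2, EffHom.f0_congr huv z⟩
      f1 := fun z z' ρ => ⟨Nat.pair (u.f1 z z' ρ).val (v.f1 z z' ρ).val,
        pairHom.pair_mem _ _ (EffHom.f1_congr huv z z' ρ)⟩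
      tr0 := u.tr0.pair (v.tr0.pair cη)
      tr1 := u.tr1.pair v.tr1 }
  refine ⟨pathObj hp, pathObj.refl hp, pathObj.src hp, pathObj.tgt hp,
    pathObj.isRelPathObj hp, H, ?_, ?_⟩
  · exact EffHom.hom_ext (fun _ => rfl) fun _ _ _ => congrArg Prod.fst (Nat.unpair_pair _ _)
  · exact EffHom.hom_ext (fun _ => rfl) fun _ _ _ => congrArg Prod.snd (Nat.unpair_pair _ _)

end PathObject

section Propositional

variable {X I : EffObj} {p : X ⟶ I}

def EffFibrewiseConnected (p : X ⟶ I) : Prop :=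
  ∃ conn : ∀ q : FibrePair p, X.Cell q.1.1 q.1.2,
    CompComputes (fun q : FibrePair p => Nat.pair (X.α q.1.1) (X.α q.1.2)) fun q => (conn q).val

namespace EffFibrewiseConnected

noncomputable def conn (hc : EffFibrewiseConnected p) {x x' : X.A} (h : p.f0 x = p.f0 x') :
    X.Cell x x' :=
  hc.choose ⟨(x, x'), h⟩

theorem computes_conn (hc : EffFibrewiseConnected p) {T : Sort*} {J : T → ℕ} {x x' : T → X.A}
    {h : ∀ t, p.f0 (x t) = p.f0 (x' t)}
    (cx : CompComputes J fun t => X.α (x t)) (cx' : CompComputes J fun t => X.α (x' t)) :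
    CompComputes J fun t => (hc.conn (h t)).val :=
  (hc.choose_spec.precomp fun t => ⟨(x t, x' t), h t⟩).comp (cx.pair cx')

noncomputable def cellOver (hc : EffFibrewiseConnected p) (hp : EffFib p) {x x' : X.A}
    (π : I.Cell (p.f0 x) (p.f0 x')) : X.Cell x x' :=
  hp.adjust (X.compCell (hp.liftCell x π) (hc.conn (hp.f0_liftObj x π))) π

theorem f1_cellOver (hc : EffFibrewiseConnected p) (hp : EffFib p) {x x' : X.A}
    (π : I.Cell (p.f0 x) (p.f0 x')) :
    (p.f1 _ _ (hc.cellOver hp π)).val = π.val :=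
  hp.f1_adjust _ _

theorem computes_cellOver (hc : EffFibrewiseConnected p) (hp : EffFib p) {T : Sort*}
    {J : T → ℕ} {x x' : T → X.A}
    {π : ∀ t, I.Cell (p.f0 (x t)) (p.f0 (x' t))}
    (cx : CompComputes J fun t => X.α (x t)) (cx' : CompComputes J fun t => X.α (x' t))
    (cπ : CompComputes J fun t => (π t).val) :
    CompComputes J fun t => (hc.cellOver hp (π t)).val := by
  have cp := p.computes_f0 cx'
  have cy := hp.computes_liftObj cx cp cπ
  exact hp.computes_adjust cx cx' (X.computes_compCell cx cy cx'
    (hp.computes_liftCell cx cp cπ) (hc.computes_conn cy cx')) cπ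

theorem fibHomotopic (hc : EffFibrewiseConnected p) (hp : EffFib p) {Z : EffObj}
    {u v : Z ⟶ X} (huv : u ≫ p = v ≫ p) :
    FibHomotopic EffPS p u v :=
  fibHomotopic_of_cells hp huv (fun z => hc.conn (EffHom.f0_congr huv z))
    (hc.computes_conn u.tr0 v.tr0)

noncomputable def pathSection (hc : EffFibrewiseConnected p) (hp : EffFib p) :
    kernelPair hp ⟶ pathObj hp where
  f0 q := ⟨(q.1.1, q.1.2, (hc.conn q.2).val), (hc.conn q.2).2, q.2⟩
  f1 _ _ n := n
  tr0 := (CompComputes.id _).fst.pair ((CompComputes.id _).snd.pair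
    (hc.computes_conn (CompComputes.id _).fst (CompComputes.id _).snd))
  tr1 := (CompComputes.id _).snd.snd

/-- The path object has the 1-cells of the kernel pair, so identity cells of the kernel pair
give the homotopy `toKernelPair ≫ pathSection ≃ 𝟙`. -/
theorem effEqv_toKernelPair (hc : EffFibrewiseConnected p) (hp : EffFib p) :
    EffEqv (pathObj.toKernelPair hp) :=
  ⟨hc.pathSection hp, (kernelPair hp).idc.via FibrePath.ends computes_fibrePath_ends,
    effHomotopic_of_f0_eq fun _ => rfl⟩

end EffFibrewiseConnected

theorem fibrewiseConnected_of_isNTypeFib_one (h : IsNTypeFib EffPS 1 p) :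
    EffFibrewiseConnected p := by
  obtain ⟨hp, _, _, r, s, t, π₁, π₂, k, hrel, hW, hk₁, hk₂, hk, hke⟩ := h
  obtain ⟨hr, hrs, hrt, -⟩ := hrel
  obtain ⟨m, ⟨hm₁, hm₂⟩, -⟩ :=
    hW.2 _ (kernelPair.fst hp) (kernelPair.snd hp) (kernelPair.fst_comp_eq_snd_comp hp)
  obtain ⟨n, hn, cn⟩ := EffFib.exists_section_of_effEqv hk hke
  obtain ⟨η, cη⟩ := hr.exists_cell_of_retractions hrs hrt
  have hs (q : FibrePair p) : s.f0 (n (m.f0 q)) = q.1.1 := by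
    rw [← hk₁]
    exact (congrArg π₁.f0 (hn _)).trans (EffHom.f0_congr hm₁ q)
  have ht (q : FibrePair p) : t.f0 (n (m.f0 q)) = q.1.2 := by
    rw [← hk₂]
    exact (congrArg π₂.f0 (hn _)).trans (EffHom.f0_congr hm₂ q)
  exact ⟨fun q => (η (n (m.f0 q))).cast (hs q) (ht q),
    (cη.precomp fun q => n (m.f0 q)).comp ((cn.precomp m.f0).comp m.tr0)⟩

theorem isNTypeFib_one_iff : IsNTypeFib EffPS 1 p ↔ EffFib p ∧ EffFibrewiseConnected p :=
  ⟨fun h => ⟨h.1, fibrewiseConnected_of_isNTypeFib_one h⟩, fun ⟨hp, hc⟩ =>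
    ⟨hp, pathObj hp, kernelPair hp, pathObj.refl hp, pathObj.src hp, pathObj.tgt hp,
      kernelPair.fst hp, kernelPair.snd hp, pathObj.toKernelPair hp, pathObj.isRelPathObj hp,
      kernelPair.isPB, rfl, rfl, pathObj.effFib_toKernelPair hp, hc.effEqv_toKernelPair hp⟩⟩

end Propositional

section Truncation

variable {B A : EffObj}

theorem propTruncUnit_comp_propTruncProj (f : B ⟶ A) :
    PropTruncUnit f ≫ PropTruncProj f = f :=
  EffHom.hom_ext (fun _ => rfl) fun _ _ _ => rfl

theorem effFib_propTruncProj {f : B ⟶ A} (hf : EffFib f) : EffFib (PropTruncProj f) := by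
  have cin := CompComputes.id (LiftIx.code (f := PropTruncProj f))
  refine effFib_iff.2 ⟨⟨fun t => hf.liftObj t.1 t.2.2,
    fun t => t.2.2.cast rfl (hf.f0_liftObj _ _).symm, fun _ => hf.f0_liftObj _ _, fun _ => rfl,
    hf.computes_liftObj cin.fst cin.snd.fst cin.snd.snd, cin.snd.snd⟩,
    fun t => t.2.2.2, fun _ => rfl, (CompComputes.id _).snd.snd.snd⟩

theorem fibrewiseConnected_propTruncProj (f : B ⟶ A) :
    EffFibrewiseConnected (PropTruncProj f) :=
  ⟨fun q => (A.idCell (f.f0 q.1.1)).cast rfl q.2,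
    A.computes_idCell (f.computes_f0 (CompComputes.id _).fst)⟩

theorem exists_propTrunc_lift {C : EffObj} {f : B ⟶ A} {g : B ⟶ C} {h : C ⟶ A}
    (hh : EffFib h) (hc : EffFibrewiseConnected h) (hgh : g ≫ h = f) :
    ∃ d : PropTrunc f ⟶ C, d ≫ h = PropTruncProj f := by
  have hg (b : B.A) : h.f0 (g.f0 b) = f.f0 b := EffHom.f0_congr hgh b
  have cin := CompComputes.id fun x : (b : B.A) × (b' : B.A) × (PropTrunc f).Cell b b' =>
    Nat.pair (B.α x.1) (Nat.pair (B.α x.2.1) x.2.2.val)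
  let d : PropTrunc f ⟶ C :=
    { f0 := g.f0
      f1 := fun b b' σ =>
        hc.cellOver hh (EffObj.Cell.cast (X := A) σ (hg b).symm (hg b').symm)
      tr0 := g.tr0
      tr1 := hc.computes_cellOver hh (g.computes_f0 cin.fst) (g.computes_f0 cin.snd.fst)
        cin.snd.snd }
  exact ⟨d, EffHom.hom_ext hg fun _ _ _ => hc.f1_cellOver hh _⟩

end Truncation

/-- In `EFF` propositional truncation exists: every fibration
`f : B ⟶ A` factors as a map `g : B ⟶ C` followed by a propositional fibration
`h : C ⟶ A` — concretely one may take `C := (B, β, 𝒞)` with `𝒞(b,b') = 𝒜(fb,fb')` —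
universally: for any other such factorisation `g' : B ⟶ C'`, `h' : C' ⟶ A` with `h'`
a propositional fibration, there is a `d : C ⟶ C'` over `A` with `d ∘ g ≃_A g'`, and
any two such maps `d` are fibrewise homotopic over `A`. -/
theorem EFF_propositional_truncation {B A : EffObj} (f : B ⟶ A) (hf : EffFib f) :
    PropTruncUnit f ≫ PropTruncProj f = f ∧
    IsNTypeFib EffPS 1 (PropTruncProj f) ∧
    (∀ (C' : EffObj) (g' : B ⟶ C') (h' : C' ⟶ A), g' ≫ h' = f →
      IsNTypeFib EffPS 1 h' →
      (∃ d : PropTrunc f ⟶ C', d ≫ h' = PropTruncProj f ∧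
        FibHomotopic EffPS h' (PropTruncUnit f ≫ d) g') ∧
      (∀ d d' : PropTrunc f ⟶ C',
        d ≫ h' = PropTruncProj f → d' ≫ h' = PropTruncProj f →
        FibHomotopic EffPS h' (PropTruncUnit f ≫ d) g' →
        FibHomotopic EffPS h' (PropTruncUnit f ≫ d') g' →
        FibHomotopic EffPS h' d d')) := by
  refine ⟨propTruncUnit_comp_propTruncProj f,
    isNTypeFib_one_iff.2 ⟨effFib_propTruncProj hf, fibrewiseConnected_propTruncProj f⟩, ?_⟩
  intro C' g' h' hgh hh'
  obtain ⟨hfib, hconn⟩ := isNTypeFib_one_iff.1 hh'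
  obtain ⟨d, hd⟩ := exists_propTrunc_lift hfib hconn hgh
  refine ⟨⟨d, hd, hconn.fibHomotopic hfib ?_⟩,
    fun d d' hd hd' _ _ => hconn.fibHomotopic hfib (hd.trans hd'.symm)⟩
  rw [Category.assoc, hd, propTruncUnit_comp_propTruncProj, hgh]

end EffPaper
end

section
/- Let C be a path category with homotopy Π-types, f: Y → X a fibration in C, p: B → A a fibration in the slice path category C(Y) (so A → Y and p are fibrations), and Π_f(A) a homotopy Π-type of A along f in C(X). Then there exists a homotopy Π-type Π_f(B) in C(X) together with a fibration Π_f(p): Π_f(B) → Π_f(A) in C(X) such that: (1) the square with horizontal arrows the counits ε: f*Π_f(B) → B and ε: f*Π_f(A) → A and vertical arrows f*Π_f(p) and p commutes in C(Y); and (2) for each object C of C(X), the induced square of hom-sets Ho(C(X))(C, Π_f(B)) → Ho(C(Y))(f*C, B), Ho(C(X))(C, Π_f(A)) → Ho(C(Y))(f*C, A) is a pullback of sets. -/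
/-!
Let `E₀` be any homotopy Π-type of `B` along `f`. The universal property of `Π_f(A)`, applied
to `ε₀ ≫ p`, gives `G₀ : E₀ ⟶ Π_f(A)` over `X` whose counit square commutes up to fibrewise
homotopy. Factoring `G₀` through its mapping path space over `X` turns it into a fibration
`q : E₁ ⟶ Π_f(A)`; since `E₁` retracts onto `E₀` by a trivial fibration over `X`, it is again a
homotopy Π-type of `B`. Lifting the homotopy of counits along the fibration `p` makes the counit
square commute strictly, and then the hom-set square is a pullback: injectivity is the
uniqueness clause of `Π_f(B)`, surjectivity combines existence for `Π_f(B)` with uniqueness for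
`Π_f(A)`.
-/

namespace EffPaper

open CategoryTheory

section

universe v u

variable {C : Type u} [Category.{v} C]

section Pullbacks

variable {P X Y Z : C} {p₁ : P ⟶ X} {p₂ : P ⟶ Y} {f : X ⟶ Z} {g : Y ⟶ Z}

theorem isPB_iff_isPullback : IsPB p₁ p₂ f g ↔ IsPullback p₁ p₂ f g := by
  constructor
  · intro h
    choose l hl hu using fun s : Limits.PullbackCone f g => h.2 s.pt s.fst s.snd s.condition
    exact IsPullback.of_isLimit' ⟨h.1⟩ <| Limits.PullbackCone.IsLimit.mk h.1 l
      (fun s => (hl s).1) (fun s => (hl s).2) (fun s m h₁ h₂ => hu s m ⟨h₁, h₂⟩)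
  · intro h
    exact ⟨h.w, fun Q q₁ q₂ hq => ⟨h.lift q₁ q₂ hq, ⟨by simp, by simp⟩,
      fun l hl => h.hom_ext (by simp [hl.1]) (by simp [hl.2])⟩⟩

theorem IsPB.flip (h : IsPB p₁ p₂ f g) : IsPB p₂ p₁ g f :=
  isPB_iff_isPullback.2 (isPB_iff_isPullback.1 h).flip

theorem IsPB.hom_ext (h : IsPB p₁ p₂ f g) {Q : C} {z₁ z₂ : Q ⟶ P}
    (h₁ : z₁ ≫ p₁ = z₂ ≫ p₁) (h₂ : z₁ ≫ p₂ = z₂ ≫ p₂) : z₁ = z₂ :=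
  (isPB_iff_isPullback.1 h).hom_ext h₁ h₂

theorem IsPB.exists_lift (h : IsPB p₁ p₂ f g) {Q : C} (q₁ : Q ⟶ X) (q₂ : Q ⟶ Y)
    (hq : q₁ ≫ f = q₂ ≫ g) : ∃ l : Q ⟶ P, l ≫ p₁ = q₁ ∧ l ≫ p₂ = q₂ :=
  (h.2 Q q₁ q₂ hq).exists

theorem IsBinProd.isPB {T : C} (h : IsBinProd p₁ p₂) (hT : IsTerminalObj T)
    (a : X ⟶ T) (b : Y ⟶ T) : IsPB p₁ p₂ a b := by
  have terminal_ext : ∀ {W : C} (x y : W ⟶ T), x = y := fun x y => by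
    obtain ⟨z, hz⟩ := hT _
    rw [hz x, hz y]
  exact ⟨terminal_ext _ _, fun Q q₁ q₂ _ => h Q q₁ q₂⟩

end Pullbacks

variable {S : PathStruct C}

namespace IsPathCategory

theorem eqv_id (hS : IsPathCategory S) (X : C) : S.Eqv (𝟙 X) :=
  hS.eqv_of_iso _ inferInstance

theorem eqv_of_comp_left (hS : IsPathCategory S) {X Y Z : C} {f : X ⟶ Y} {g : Y ⟶ Z}
    (hf : S.Eqv f) (hfg : S.Eqv (f ≫ g)) : S.Eqv g :=
  (hS.two_out_of_six (𝟙 X) f g (by simpa) hfg).2.2.1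

theorem eqv_of_comp_eq_id (hS : IsPathCategory S) {X Y : C} {f : X ⟶ Y} {g : Y ⟶ X}
    (hg : S.Eqv g) (hfg : f ≫ g = 𝟙 X) : S.Eqv f :=
  (hS.two_out_of_six f g (𝟙 X) (hfg ▸ hS.eqv_id X) (by simpa)).1

theorem fib_of_isPB (hS : IsPathCategory S) {P X Y Z : C} {p₁ : P ⟶ X} {p₂ : P ⟶ Y}
    {f : X ⟶ Z} {g : Y ⟶ Z} (h : IsPB p₁ p₂ f g) (hf : S.Fib f) : S.Fib p₂ := by
  obtain ⟨P', p₁', p₂', h', hp₂'⟩ := hS.pullback f g hf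
  rw [← (isPB_iff_isPullback.1 h).isoIsPullback_hom_snd _ _ (isPB_iff_isPullback.1 h')]
  exact hS.fib_comp _ _ (hS.fib_of_iso _ inferInstance) hp₂'

end IsPathCategory

namespace IsRelPathObj

variable {X I PX : C} {g : X ⟶ I} {r : X ⟶ PX} {s t : PX ⟶ X}

theorem flip (h : IsRelPathObj S g r s t) : IsRelPathObj S g r t s := by
  obtain ⟨hr, hrs, hrt, hst, W, π₁, π₂, k, hW, hk₁, hk₂, hk⟩ := h
  exact ⟨hr, hrt, hrs, hst.symm, W, π₂, π₁, k, hW.flip, hk₂, hk₁, hk⟩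

theorem fib_src (hS : IsPathCategory S) (hg : S.Fib g) (h : IsRelPathObj S g r s t) :
    S.Fib s := by
  obtain ⟨-, -, -, -, W, π₁, π₂, k, hW, hk₁, -, hk⟩ := h
  exact hk₁ ▸ hS.fib_comp _ _ hk (hS.fib_of_isPB hW.flip hg)

theorem eqv_src (hS : IsPathCategory S) (h : IsRelPathObj S g r s t) : S.Eqv s :=
  hS.eqv_of_comp_left h.1 (h.2.1 ▸ hS.eqv_id X)

end IsRelPathObj

theorem IsPathObj.isRelPathObj {X PX T : C} {r : X ⟶ PX} {s t : PX ⟶ X}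
    (h : IsPathObj S r s t) (hT : IsTerminalObj T) (a : X ⟶ T) : IsRelPathObj S a r s t := by
  obtain ⟨hr, hrs, hrt, W, π₁, π₂, k, hW, hk₁, hk₂, hk⟩ := h
  have hpb := hW.isPB hT a a
  refine ⟨hr, hrs, hrt, ?_, W, π₁, π₂, k, hpb, hk₁, hk₂, hk⟩
  rw [← hk₁, ← hk₂, Category.assoc, Category.assoc, hpb.1]

theorem exists_factorization_over (hS : IsPathCategory S) {M N I PN : C} {g : N ⟶ I}
    (hg : S.Fib g) {r : N ⟶ PN} {s t : PN ⟶ N} (hP : IsRelPathObj S g r s t) (k : M ⟶ N)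
    (hk : S.Fib (k ≫ g)) :
    ∃ (Mk : C) (j : M ⟶ Mk) (q : Mk ⟶ N) (c : Mk ⟶ M),
      S.Eqv j ∧ S.Fib q ∧ j ≫ q = k ∧ S.Fib c ∧ S.Eqv c ∧ j ≫ c = 𝟙 M ∧
      FibHomotopic S g (c ≫ k) q := by
  have hs := hP.fib_src hS hg
  obtain ⟨-, hrs, hrt, hst, W, π₁, π₂, w, hW, hw₁, hw₂, hw⟩ := id hP
  -- the mapping path space `Mk = PN ×_N M` of `k`
  obtain ⟨Mk, a, c, hMk, hc⟩ := hS.pullback s k hs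
  have hc' : S.Eqv c := (hS.triv_fib_pb s k a c hs (hP.eqv_src hS) hMk).2
  obtain ⟨j, hj₁, hj₂⟩ := hMk.exists_lift (k ≫ r) (𝟙 M) (by simp [hrs])
  refine ⟨Mk, j, a ≫ t, c, hS.eqv_of_comp_eq_id hc' hj₂, ?_, by simp [reassoc_of% hj₁, hrt],
    hc, hc', hj₂, ⟨PN, r, s, t, hP, a, hMk.1, rfl⟩⟩
  -- `a ≫ t = ψ ≫ e₂`, where `ψ` is a base change of `w` along `M ×_I N ⟶ N ×_I N`
  obtain ⟨MN, e₁, e₂, hMN, he₂⟩ := hS.pullback (k ≫ g) g hk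
  obtain ⟨φ, hφ₁, hφ₂⟩ := hW.exists_lift (e₁ ≫ k) e₂ (by simpa using hMN.1)
  obtain ⟨ψ, hψ₁, hψ₂⟩ := hMN.exists_lift c (a ≫ t)
    (by rw [← Category.assoc, ← hMk.1, Category.assoc, hst, Category.assoc])
  have hφ : IsPullback e₁ φ k π₁ :=
    IsPullback.of_bot (hφ₂ ▸ isPB_iff_isPullback.1 hMN) hφ₁.symm (isPB_iff_isPullback.1 hW)
  have hψφ : ψ ≫ φ = a ≫ w := hW.hom_ext (by simp [hφ₁, reassoc_of% hψ₁, hw₁, hMk.1])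
    (by simp [hφ₂, hψ₂, hw₂])
  have hψ : IsPullback ψ a φ w :=
    IsPullback.of_right (by simpa [hψ₁, hw₁] using (isPB_iff_isPullback.1 hMk).flip) hψφ hφ
  rw [← hψ₂]
  exact hS.fib_comp _ _ (hS.fib_of_isPB (isPB_iff_isPullback.2 hψ.flip) hw) he₂

theorem exists_factorization (hS : IsPathCategory S) {M N : C} (k : M ⟶ N) :
    ∃ (Mk : C) (j : M ⟶ Mk) (q : Mk ⟶ N) (c : Mk ⟶ M),
      S.Eqv j ∧ S.Fib q ∧ j ≫ q = k ∧ S.Fib c ∧ S.Eqv c ∧ j ≫ c = 𝟙 M := by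
  obtain ⟨T, hT, hTfib⟩ := hS.terminal
  obtain ⟨a, -⟩ := hT N
  obtain ⟨PN, r, s, t, hP⟩ := hS.path_obj N
  obtain ⟨Mk, j, q, c, hj, hq, hjq, hc, hc', hjc, -⟩ :=
    exists_factorization_over hS (hTfib N a) (hP.isRelPathObj hT a) k (hTfib M _)
  exact ⟨Mk, j, q, c, hj, hq, hjq, hc, hc', hjc⟩

theorem exists_relPathObj (hS : IsPathCategory S) {X I : C} {g : X ⟶ I} (hg : S.Fib g) :
    ∃ (PX : C) (r : X ⟶ PX) (s t : PX ⟶ X), IsRelPathObj S g r s t := by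
  obtain ⟨W, π₁, π₂, hW, -⟩ := hS.pullback g g hg
  obtain ⟨δ, hδ₁, hδ₂⟩ := hW.exists_lift (𝟙 X) (𝟙 X) rfl
  obtain ⟨PX, r, q, -, hr, hq, hrq, -⟩ := exists_factorization hS δ
  exact ⟨PX, r, q ≫ π₁, q ≫ π₂, hr, by simp [reassoc_of% hrq, hδ₁],
    by simp [reassoc_of% hrq, hδ₂], by simp [hW.1], W, π₁, π₂, q, hW, rfl, rfl, hq⟩

namespace FibHomotopic

variable {Z X I : C} {g : X ⟶ I} {u v : Z ⟶ X}

theorem refl (hS : IsPathCategory S) (hg : S.Fib g) (u : Z ⟶ X) : FibHomotopic S g u u := by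
  obtain ⟨P, r, s, t, hP⟩ := exists_relPathObj hS hg
  exact ⟨P, r, s, t, hP, u ≫ r, by simp [hP.2.1], by simp [hP.2.2.1]⟩

theorem symm (h : FibHomotopic S g u v) : FibHomotopic S g v u := by
  obtain ⟨P, r, s, t, hP, H, hs, ht⟩ := h
  exact ⟨P, r, t, s, hP.flip, H, ht, hs⟩

theorem precomp {Z' : C} (e : Z' ⟶ Z) (h : FibHomotopic S g u v) :
    FibHomotopic S g (e ≫ u) (e ≫ v) := by
  obtain ⟨P, r, s, t, hP, H, hs, ht⟩ := h
  exact ⟨P, r, s, t, hP, e ≫ H, by simp [hs], by simp [ht]⟩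

theorem comp_eq (h : FibHomotopic S g u v) : u ≫ g = v ≫ g := by
  obtain ⟨P, r, s, t, hP, H, rfl, rfl⟩ := h
  simp [hP.2.2.2.1]

end FibHomotopic

theorem fibHomotopic_of_trivFib (hS : IsPathCategory S) {T B Z : C} {k : T ⟶ B}
    (hk : S.Fib k) (hk' : S.Eqv k) {z₁ z₂ : Z ⟶ T} (h : z₁ ≫ k = z₂ ≫ k) :
    FibHomotopic S k z₁ z₂ := by
  obtain ⟨P, r, s, t, hP⟩ := exists_relPathObj hS hk
  obtain ⟨hr, hrs, hrt, -, W, π₁, π₂, w, hW, hw₁, hw₂, hw⟩ := id hP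
  have hπ₁ : S.Eqv π₁ := (hS.triv_fib_pb k k π₂ π₁ hk hk' hW.flip).2
  obtain ⟨δ, hδ₁, hδ₂⟩ := hW.exists_lift (𝟙 T) (𝟙 T) rfl
  have hrw : r ≫ w = δ := hW.hom_ext (by simp [hw₁, hrs, hδ₁]) (by simp [hw₂, hrt, hδ₂])
  -- `r ≫ w` is the diagonal, a section of the trivial fibration `π₁`
  have hw' : S.Eqv w := hS.eqv_of_comp_left hr (hrw ▸ hS.eqv_of_comp_eq_id hπ₁ hδ₁)
  obtain ⟨σ, hσ⟩ := hS.triv_fib_sect w hw hw'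
  obtain ⟨l, hl₁, hl₂⟩ := hW.exists_lift z₁ z₂ h
  exact ⟨P, r, s, t, hP, l ≫ σ, by simp [← hw₁, reassoc_of% hσ, hl₁],
    by simp [← hw₂, reassoc_of% hσ, hl₂]⟩

/-- Paths in `T` with both endpoints lifted along `π` are paths with a lifted source,
together with a lift of the target. -/
theorem isPB_endpoint_lifts {I T E PT V EE Q D : C} {g : T ⟶ I} {π : E ⟶ T} {s t : PT ⟶ T}
    {ρ₁ ρ₂ : V ⟶ T} {w : PT ⟶ V} {pr₁ pr₂ : EE ⟶ E} {ν : EE ⟶ V} {qc₁ : Q ⟶ PT}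
    {qc₂ : Q ⟶ EE} {dP : D ⟶ PT} {dE : D ⟶ E} {χ : Q ⟶ D}
    (hV : IsPB ρ₁ ρ₂ g g) (hw₁ : w ≫ ρ₁ = s) (hw₂ : w ≫ ρ₂ = t)
    (hEE : IsPB pr₁ pr₂ (π ≫ g) (π ≫ g)) (hν₁ : ν ≫ ρ₁ = pr₁ ≫ π) (hν₂ : ν ≫ ρ₂ = pr₂ ≫ π)
    (hQ : IsPB qc₁ qc₂ w ν) (hD : IsPB dP dE s π)
    (hχ₁ : χ ≫ dP = qc₁) (hχ₂ : χ ≫ dE = qc₂ ≫ pr₁) :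
    IsPB (qc₂ ≫ pr₂) χ π (dP ≫ t) := by
  have hst : s ≫ g = t ≫ g := by rw [← hw₁, ← hw₂, Category.assoc, Category.assoc, hV.1]
  refine ⟨by rw [reassoc_of% hχ₁, ← hw₂, reassoc_of% hQ.1, hν₂, Category.assoc], ?_⟩
  intro Z x y hxy
  obtain ⟨l, hl₁, hl₂⟩ := hEE.exists_lift (y ≫ dE) x (by
    simp only [Category.assoc]
    rw [← reassoc_of% hD.1, hst, ← reassoc_of% hxy])
  obtain ⟨z, hz₁, hz₂⟩ := hQ.exists_lift (y ≫ dP) l (hV.hom_ext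
    (by simp [hw₁, hν₁, reassoc_of% hl₁, hD.1]) (by simp [hw₂, hν₂, reassoc_of% hl₂, hxy]))
  refine ⟨z, ⟨by rw [reassoc_of% hz₂, hl₂], hD.hom_ext (by simp [hχ₁, hz₁])
    (by simp [hχ₂, reassoc_of% hz₂, hl₁])⟩, fun z' ⟨hz'₁, hz'₂⟩ => ?_⟩
  refine hQ.hom_ext (by rw [hz₁, ← hχ₁, reassoc_of% hz'₂]) (hEE.hom_ext ?_ ?_)
  · rw [Category.assoc, ← hχ₂, reassoc_of% hz'₂, hz₂, hl₁]
  · rw [Category.assoc, hz'₁, hz₂, hl₂]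

theorem exists_pathLifting (hS : IsPathCategory S) {I T E PT : C} {g : T ⟶ I} (hg : S.Fib g)
    {π : E ⟶ T} (hπ : S.Fib π) {r : T ⟶ PT} {s t : PT ⟶ T} (hP : IsRelPathObj S g r s t) :
    ∃ (PE : C) (rE : E ⟶ PE) (sE tE : PE ⟶ E) (L : PE ⟶ PT),
      IsRelPathObj S (π ≫ g) rE sE tE ∧ L ≫ t = tE ≫ π ∧
      ∀ {Z : C} (e : Z ⟶ E) (Θ : Z ⟶ PT), e ≫ π = Θ ≫ s →
        ∃ Λ : Z ⟶ PE, Λ ≫ sE = e ∧ Λ ≫ L = Θ := by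
  have hs := hP.fib_src hS hg
  have hs' := hP.eqv_src hS
  obtain ⟨-, hrs, hrt, -, V, ρ₁, ρ₂, w, hV, hw₁, hw₂, hw⟩ := id hP
  obtain ⟨EE, pr₁, pr₂, hEE, -⟩ := hS.pullback (π ≫ g) (π ≫ g) (hS.fib_comp _ _ hπ hg)
  obtain ⟨ν, hν₁, hν₂⟩ := hV.exists_lift (pr₁ ≫ π) (pr₂ ≫ π) (by simpa using hEE.1)
  -- `Q`: paths in `T` with both endpoints lifted; `PE` factors the constant paths `E ⟶ Q`
  obtain ⟨Q, qc₁, qc₂, hQ, hqc₂⟩ := hS.pullback w ν hw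
  obtain ⟨δ, hδ₁, hδ₂⟩ := hEE.exists_lift (𝟙 E) (𝟙 E) rfl
  obtain ⟨δ', hδ'₁, hδ'₂⟩ := hQ.exists_lift (π ≫ r) δ (hV.hom_ext
    (by simp [hw₁, hrs, hν₁, reassoc_of% hδ₁]) (by simp [hw₂, hrt, hν₂, reassoc_of% hδ₂]))
  obtain ⟨PE, rE, qE, -, hrE, hqE, hrqE, -⟩ := exists_factorization hS δ'
  have hPE : IsRelPathObj S (π ≫ g) rE (qE ≫ qc₂ ≫ pr₁) (qE ≫ qc₂ ≫ pr₂) :=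
    ⟨hrE, by simp [reassoc_of% hrqE, reassoc_of% hδ'₂, hδ₁],
      by simp [reassoc_of% hrqE, reassoc_of% hδ'₂, hδ₂], by simp [hEE.1],
      EE, pr₁, pr₂, qE ≫ qc₂, hEE, by simp, by simp, hS.fib_comp _ _ hqE hqc₂⟩
  obtain ⟨D, dP, dE, hD, -⟩ := hS.pullback s π hs
  have hdE : S.Eqv dE := (hS.triv_fib_pb s π dP dE hs hs' hD).2
  obtain ⟨χ, hχ₁, hχ₂⟩ := hD.exists_lift qc₁ (qc₂ ≫ pr₁)
    (by rw [← hw₁, reassoc_of% hQ.1, hν₁, Category.assoc])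
  have hχ : S.Fib χ :=
    hS.fib_of_isPB (isPB_endpoint_lifts hV hw₁ hw₂ hEE hν₁ hν₂ hQ hD hχ₁ hχ₂) hπ
  have hΦ : S.Eqv (qE ≫ χ) := hS.eqv_of_comp_left hrE <| hS.eqv_of_comp_eq_id hdE <| by
    simp [reassoc_of% hrqE, hχ₂, reassoc_of% hδ'₂, hδ₁]
  obtain ⟨σ, hσ⟩ := hS.triv_fib_sect (qE ≫ χ) (hS.fib_comp _ _ hqE hχ) hΦ
  refine ⟨PE, rE, _, _, qE ≫ qc₁, hPE,
    by simp [← hw₂, reassoc_of% hQ.1, hν₂], fun e Θ he => ?_⟩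
  obtain ⟨z, hz₁, hz₂⟩ := hD.exists_lift Θ e he.symm
  exact ⟨z ≫ σ, by simp [← hχ₂, reassoc_of% hσ, hz₂], by simp [← hχ₁, reassoc_of% hσ, hz₁]⟩

theorem FibHomotopic.exists_lift (hS : IsPathCategory S) {I T E Z : C} {g : T ⟶ I}
    (hg : S.Fib g) {π : E ⟶ T} (hπ : S.Fib π) {e : Z ⟶ E} {v : Z ⟶ T}
    (h : FibHomotopic S g (e ≫ π) v) :
    ∃ e' : Z ⟶ E, e' ≫ π = v ∧ FibHomotopic S (π ≫ g) e e' := by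
  obtain ⟨PT, r, s, t, hP, Θ, hΘs, hΘt⟩ := h
  obtain ⟨PE, rE, sE, tE, L, hPE, hL, hlift⟩ := exists_pathLifting hS hg hπ hP
  obtain ⟨Λ, hΛs, hΛL⟩ := hlift e Θ hΘs.symm
  exact ⟨Λ ≫ tE, by rw [Category.assoc, ← hL, reassoc_of% hΛL, hΘt],
    PE, rE, sE, tE, hPE, Λ, hΛs, rfl⟩

theorem exists_section_of_eqv (hS : IsPathCategory S) {M N E : C} {p : E ⟶ N}
    (hp : S.Fib p) {w : M ⟶ N} (hw : S.Eqv w) (a : M ⟶ E) (ha : a ≫ p = w) :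
    ∃ σ : N ⟶ E, σ ≫ p = 𝟙 N := by
  obtain ⟨Mk, j, q, c, hj, hq, hjq, hc, hc', hjc⟩ := exists_factorization hS w
  obtain ⟨σq, hσq⟩ := hS.triv_fib_sect q hq (hS.eqv_of_comp_left hj (hjq ▸ hw))
  obtain ⟨E', b₁, b₂, hE', hb₂⟩ := hS.pullback p q hp
  obtain ⟨a', ha'₁, ha'₂⟩ := hE'.exists_lift a j (by rw [ha, hjq])
  -- `Mk` deforms onto `M` over `M`, so the partial section `a'` extends along `j`
  have hcj : FibHomotopic S c ((c ≫ a') ≫ b₂) (𝟙 Mk) := by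
    rw [Category.assoc, ha'₂]
    exact fibHomotopic_of_trivFib hS hc hc' (by simp [hjc])
  obtain ⟨e, he, -⟩ := hcj.exists_lift hS hc hb₂
  exact ⟨σq ≫ e ≫ b₁, by simp [hE'.1, reassoc_of% he, hσq]⟩

theorem exists_lift_of_eqv (hS : IsPathCategory S) {M N V T : C} {w : M ⟶ N}
    (hw : S.Eqv w) {q : V ⟶ T} (hq : S.Fib q) (a : M ⟶ V) (b : N ⟶ T) (hab : a ≫ q = w ≫ b) :
    ∃ l : N ⟶ V, l ≫ q = b := by
  obtain ⟨Vb, c₁, c₂, hVb, hc₂⟩ := hS.pullback q b hq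
  obtain ⟨a', -, ha'⟩ := hVb.exists_lift a w hab
  obtain ⟨σ, hσ⟩ := exists_section_of_eqv hS hc₂ hw a' ha'
  exact ⟨σ ≫ c₁, by rw [Category.assoc, hVb.1, reassoc_of% hσ]⟩

theorem FibHomotopic.postcomp (hS : IsPathCategory S) {X I X' I' Z : C} {g : X ⟶ I}
    {g' : X' ⟶ I'} (hg' : S.Fib g') (φ : X ⟶ X') (κ : I ⟶ I') (hφ : φ ≫ g' = g ≫ κ)
    {u v : Z ⟶ X} (h : FibHomotopic S g u v) : FibHomotopic S g' (u ≫ φ) (v ≫ φ) := by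
  obtain ⟨P, r, s, t, ⟨hr, hrs, hrt, hst, -⟩, H, rfl, rfl⟩ := h
  obtain ⟨P', r', s', t', hP'⟩ := exists_relPathObj hS hg'
  obtain ⟨-, hrs', hrt', -, W', π₁', π₂', w', hW', hw₁', hw₂', hw'⟩ := id hP'
  obtain ⟨b, hb₁, hb₂⟩ := hW'.exists_lift (s ≫ φ) (t ≫ φ) (by
    rw [Category.assoc, Category.assoc, hφ, reassoc_of% hst])
  -- a map of path objects `P ⟶ P'` over `φ`, lifting the equivalence `r` against `w'`
  obtain ⟨θ, hθ⟩ := exists_lift_of_eqv hS hr hw' (φ ≫ r') b (hW'.hom_ext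
    (by simp [hw₁', hrs', hb₁, reassoc_of% hrs]) (by simp [hw₂', hrt', hb₂, reassoc_of% hrt]))
  exact ⟨P', r', s', t', hP', H ≫ θ, by simp [← hw₁', reassoc_of% hθ, hb₁],
    by simp [← hw₂', reassoc_of% hθ, hb₂]⟩

theorem FibHomotopic.of_isPB (hS : IsPathCategory S) {X I X' I' Z : C} {g : X ⟶ I}
    (hg : S.Fib g) {x : X' ⟶ X} {g' : X' ⟶ I'} {i : I' ⟶ I} (hpb : IsPB x g' g i)
    {z z' : Z ⟶ X'} (hz : z ≫ g' = z' ≫ g') (h : FibHomotopic S g (z ≫ x) (z' ≫ x)) :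
    FibHomotopic S g' z z' := by
  obtain ⟨P, r, s, t, hP, H, hHs, hHt⟩ := h
  have hs := hP.fib_src hS hg
  obtain ⟨-, hrs, hrt, hst, W, π₁, π₂, w, hW, hw₁, hw₂, hw⟩ := id hP
  -- the base change `R = P ×_X X'` of the path object, with source `ρX` and target `tR`
  obtain ⟨R, ρP, ρX, hR, -⟩ := hS.pullback s x hs
  obtain ⟨tR, htR₁, htR₂⟩ := hpb.exists_lift (ρP ≫ t) (ρX ≫ g')
    (by rw [Category.assoc, ← hst, reassoc_of% hR.1, hpb.1, Category.assoc])
  obtain ⟨rR, hrR₁, hrR₂⟩ := hR.exists_lift (x ≫ r) (𝟙 X') (by simp [hrs])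
  obtain ⟨W', π₁', π₂', hW', -⟩ := hS.pullback g' g' (hS.fib_of_isPB hpb hg)
  obtain ⟨wR, hwR₁, hwR₂⟩ := hW'.exists_lift ρX tR (by rw [htR₂])
  obtain ⟨ν, hν₁, hν₂⟩ := hW.exists_lift (π₁' ≫ x) (π₂' ≫ x) (by
    rw [Category.assoc, Category.assoc, hpb.1, reassoc_of% hW'.1])
  have hν : IsPullback π₁' ν x π₁ := IsPullback.of_bot
    (by simpa [hν₂, hpb.1] using ((isPB_iff_isPullback.1 hW').flip.paste_horiz
      (isPB_iff_isPullback.1 hpb)).flip) hν₁.symm (isPB_iff_isPullback.1 hW)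
  have hwRν : wR ≫ ν = ρP ≫ w := hW.hom_ext (by simp [hν₁, reassoc_of% hwR₁, hw₁, hR.1])
    (by simp [hν₂, reassoc_of% hwR₂, hw₂, htR₁])
  have hwR : IsPullback wR ρP ν w :=
    IsPullback.of_right (by simpa [hwR₁, hw₁] using (isPB_iff_isPullback.1 hR).flip) hwRν hν
  have hPR : IsRelPathObj S g' rR ρX tR :=
    ⟨hS.eqv_of_comp_eq_id (hS.triv_fib_pb s x ρP ρX hs (hP.eqv_src hS) hR).2 hrR₂, hrR₂,
      hpb.hom_ext (by simp [htR₁, reassoc_of% hrR₁, hrt]) (by simp [htR₂, reassoc_of% hrR₂]),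
      htR₂.symm, W', π₁', π₂', wR, hW', hwR₁, hwR₂,
      hS.fib_of_isPB (isPB_iff_isPullback.2 hwR.flip) hw⟩
  obtain ⟨HR, hHR₁, hHR₂⟩ := hR.exists_lift H z hHs
  exact ⟨R, rR, ρX, tR, hPR, HR, hHR₂,
    hpb.hom_ext (by simp [htR₁, reassoc_of% hHR₁, hHt]) (by simp [htR₂, reassoc_of% hHR₂, hz])⟩

theorem FibHomotopic.trans (hS : IsPathCategory S) {X I Z : C} {g : X ⟶ I} (hg : S.Fib g)
    {u v w : Z ⟶ X} (h₁ : FibHomotopic S g u v) (h₂ : FibHomotopic S g v w) :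
    FibHomotopic S g u w := by
  have huv := h₁.comp_eq
  have hvw := h₂.comp_eq
  obtain ⟨P, r, s, t, hP, H, hHs, hHt⟩ := h₁
  obtain ⟨-, -, -, -, W, π₁, π₂, k, hW, hk₁, hk₂, hk⟩ := id hP
  -- transport `H` along `h₂` in the fibration of paths starting at `u`
  obtain ⟨K, κ₁, κ₂, hK, hκ₂⟩ := hS.pullback g (u ≫ g) hg
  obtain ⟨κ, hκ₁, hκ₂'⟩ := hW.exists_lift (κ₂ ≫ u) κ₁ (by rw [Category.assoc, hK.1])
  obtain ⟨Pu, a₁, a₂, hPu, ha₂⟩ := hS.pullback k κ hk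
  obtain ⟨ℓv, hℓv₁, hℓv₂⟩ := hK.exists_lift v (𝟙 Z) (by simp [huv])
  obtain ⟨ℓw, hℓw₁, hℓw₂⟩ := hK.exists_lift w (𝟙 Z) (by simp [huv, hvw])
  obtain ⟨e, -, he⟩ := hPu.exists_lift H ℓv (hW.hom_ext
    (by simp [hk₁, hHs, hκ₁, reassoc_of% hℓv₂]) (by simp [hk₂, hHt, hκ₂', hℓv₁]))
  have hℓ : FibHomotopic S κ₂ (e ≫ a₂) ℓw :=
    he ▸ FibHomotopic.of_isPB hS hg hK (by rw [hℓv₂, hℓw₂]) (by rwa [hℓv₁, hℓw₁])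
  obtain ⟨e', he', -⟩ := hℓ.exists_lift hS hκ₂ ha₂
  exact ⟨P, r, s, t, hP, e' ≫ a₁,
    by simp [← hk₁, reassoc_of% hPu.1, reassoc_of% he', hκ₁, reassoc_of% hℓw₂],
    by simp [← hk₂, reassoc_of% hPu.1, reassoc_of% he', hκ₂', hℓw₁]⟩

namespace HPiLiftGood

variable {Y X Z E F A Ah : C} {f : Y ⟶ X} {g : Z ⟶ Y} {pE : E ⟶ X} {u₁ : F ⟶ E}
  {u₂ : F ⟶ Y} {ε : F ⟶ Z} {h : A ⟶ X} {v₁ : Ah ⟶ A} {v₂ : Ah ⟶ Y} {m : Ah ⟶ Z} {M : A ⟶ E}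

theorem of_fibHomotopic (hS : IsPathCategory S) (hg : S.Fib g) (hpE : S.Fib pE)
    (hF : IsPB u₁ u₂ pE f) (hε : ε ≫ g = u₂) (hv : v₁ ≫ h = v₂ ≫ f)
    (hM : HPiLiftGood S f g pE u₁ u₂ ε h v₁ v₂ m M) {M' : A ⟶ E}
    (hMM' : FibHomotopic S pE M M') (hM' : M' ≫ pE = h) :
    HPiLiftGood S f g pE u₁ u₂ ε h v₁ v₂ m M' := by
  refine ⟨hM', fun fM' h₁ h₂ => ?_⟩
  obtain ⟨fM, hfM₁, hfM₂⟩ := hF.exists_lift (v₁ ≫ M) v₂ (by rw [Category.assoc, hM.1, hv])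
  have hfM : FibHomotopic S u₂ fM fM' := FibHomotopic.of_isPB hS hpE hF (hfM₂.trans h₂.symm)
    (by rw [hfM₁, h₁]; exact hMM'.precomp v₁)
  exact (hfM.postcomp hS hg ε (𝟙 Y) (by simp [hε])).symm.trans hS hg (hM.2 fM hfM₁ hfM₂)

theorem precomp (hF : IsPB u₁ u₂ pE f) (hv : v₁ ≫ h = v₂ ≫ f)
    (hM : HPiLiftGood S f g pE u₁ u₂ ε h v₁ v₂ m M) {A' A'h : C} (c : A' ⟶ A)
    {v₁' : A'h ⟶ A'} {v₂' : A'h ⟶ Y} (fc : A'h ⟶ Ah) (hfc₁ : fc ≫ v₁ = v₁' ≫ c)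
    (hfc₂ : fc ≫ v₂ = v₂') :
    HPiLiftGood S f g pE u₁ u₂ ε (c ≫ h) v₁' v₂' (fc ≫ m) (c ≫ M) := by
  refine ⟨by rw [Category.assoc, hM.1], fun fM h₁ h₂ => ?_⟩
  obtain ⟨fM₀, hfM₀₁, hfM₀₂⟩ := hF.exists_lift (v₁ ≫ M) v₂ (by rw [Category.assoc, hM.1, hv])
  rw [hF.hom_ext (z₁ := fM) (z₂ := fc ≫ fM₀) (by simp [h₁, hfM₀₁, reassoc_of% hfc₁])
    (by simp [h₂, hfM₀₂, hfc₂]), Category.assoc]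
  exact (hM.2 fM₀ hfM₀₁ hfM₀₂).precomp fc

theorem comp (hS : IsPathCategory S) {Z₁ E₁ F₁ : C} {g₁ : Z₁ ⟶ Y} {pE₁ : E₁ ⟶ X}
    {v₁' : F₁ ⟶ E₁} {v₂' : F₁ ⟶ Y} {ε₁ : F₁ ⟶ Z₁} {m₁ : Ah ⟶ Z₁} {M₁ : A ⟶ E₁}
    (hg : S.Fib g) (hF : IsPB u₁ u₂ pE f) (hF₁ : IsPB v₁' v₂' pE₁ f) (c : E₁ ⟶ E)
    (hc : c ≫ pE = pE₁) (fc : F₁ ⟶ F) (hfc₁ : fc ≫ u₁ = v₁' ≫ c) (hfc₂ : fc ≫ u₂ = v₂')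
    (k : Z₁ ⟶ Z) (hk : k ≫ g = g₁) (hε : ε₁ ≫ k = fc ≫ ε) (hv : v₁ ≫ h = v₂ ≫ f)
    (hM : HPiLiftGood S f g₁ pE₁ v₁' v₂' ε₁ h v₁ v₂ m₁ M₁) :
    HPiLiftGood S f g pE u₁ u₂ ε h v₁ v₂ (m₁ ≫ k) (M₁ ≫ c) := by
  refine ⟨by rw [Category.assoc, hc, hM.1], fun φ h₁ h₂ => ?_⟩
  obtain ⟨φ₁, hφ₁, hφ₂⟩ := hF₁.exists_lift (v₁ ≫ M₁) v₂ (by rw [Category.assoc, hM.1, hv])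
  rw [hF.hom_ext (z₁ := φ) (z₂ := φ₁ ≫ fc) (by simp [h₁, hfc₁, reassoc_of% hφ₁])
    (by simp [h₂, hfc₂, hφ₂]), Category.assoc, ← hε, ← Category.assoc]
  exact (hM.2 φ₁ hφ₁ hφ₂).postcomp hS hg k (𝟙 Y) (by simp [hk])

end HPiLiftGood

namespace IsHPi

variable {Y X Z E F : C} {f : Y ⟶ X} {g : Z ⟶ Y} {pE : E ⟶ X} {u₁ : F ⟶ E} {u₂ : F ⟶ Y}
  {ε : F ⟶ Z}

theorem of_fibHomotopic_counit (hS : IsPathCategory S) (hg : S.Fib g)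
    (h : IsHPi S f g pE u₁ u₂ ε) {ε' : F ⟶ Z} (hεε' : FibHomotopic S g ε ε') :
    IsHPi S f g pE u₁ u₂ ε' := by
  have good_iff : ∀ {A Ah : C} {a : A ⟶ X} {v₁ : Ah ⟶ A} {v₂ : Ah ⟶ Y} {m : Ah ⟶ Z}
      {M : A ⟶ E}, HPiLiftGood S f g pE u₁ u₂ ε a v₁ v₂ m M ↔
        HPiLiftGood S f g pE u₁ u₂ ε' a v₁ v₂ m M := fun {_ _ _ _ _ _ _} =>
    and_congr_right fun _ => forall₃_congr fun fM _ _ =>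
      ⟨(hεε'.precomp fM).symm.trans hS hg, (hεε'.precomp fM).trans hS hg⟩
  refine ⟨h.fib, h.pb, hεε'.comp_eq.symm.trans h.over', fun a v₁ v₂ hv m hm => ?_,
    fun a v₁ v₂ hv m hm M M' hM hM' => h.unique a v₁ v₂ hv m hm M M' (good_iff.2 hM)
      (good_iff.2 hM')⟩
  obtain ⟨M, hM⟩ := h.lift a v₁ v₂ hv m hm
  exact ⟨M, good_iff.1 hM⟩

theorem exists_counit_lift (hS : IsPathCategory S) {A B : C} {pA : A ⟶ Y} (hpA : S.Fib pA)
    {p : B ⟶ A} (hp : S.Fib p) {ε : F ⟶ B} (h : IsHPi S f (p ≫ pA) pE u₁ u₂ ε) {a : F ⟶ A}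
    (ha : FibHomotopic S pA (ε ≫ p) a) :
    ∃ ε' : F ⟶ B, ε' ≫ p = a ∧ IsHPi S f (p ≫ pA) pE u₁ u₂ ε' := by
  obtain ⟨ε', hε'a, hεε'⟩ := ha.exists_lift hS hpA hp
  exact ⟨ε', hε'a, h.of_fibHomotopic_counit hS (hS.fib_comp _ _ hp hpA) hεε'⟩

theorem of_retract (hS : IsPathCategory S) (hg : S.Fib g) (h : IsHPi S f g pE u₁ u₂ ε)
    {E₁ F₁ : C} {pE₁ : E₁ ⟶ X} (hpE₁ : S.Fib pE₁) {j : E ⟶ E₁} {c : E₁ ⟶ E} (hc : S.Fib c)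
    (hc' : S.Eqv c) (hjc : j ≫ c = 𝟙 E) (hcp : c ≫ pE = pE₁) {v₁ : F₁ ⟶ E₁} {v₂ : F₁ ⟶ Y}
    (hF₁ : IsPB v₁ v₂ pE₁ f) {fc : F₁ ⟶ F} (hfc₁ : fc ≫ u₁ = v₁ ≫ c) (hfc₂ : fc ≫ u₂ = v₂) :
    IsHPi S f g pE₁ v₁ v₂ (fc ≫ ε) := by
  refine ⟨hpE₁, hF₁, by rw [Category.assoc, h.over', hfc₂], fun a w₁ w₂ hw m hm => ?_,
    fun {A _} a w₁ w₂ hw m hm M M' hM hM' => ?_⟩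
  · obtain ⟨M, hM₁, hM₂⟩ := h.lift a w₁ w₂ hw m hm
    refine ⟨M ≫ j, by rw [Category.assoc, ← hcp, reassoc_of% hjc, hM₁], fun fM h₁ h₂ => ?_⟩
    rw [← Category.assoc]
    exact hM₂ _ (by rw [Category.assoc, hfc₁, reassoc_of% h₁, hjc, Category.comp_id])
      (by rw [Category.assoc, hfc₂, h₂])
  · have good_comp : ∀ {M : A ⟶ E₁}, HPiLiftGood S f g pE₁ v₁ v₂ (fc ≫ ε) _ w₁ w₂ m M →
        HPiLiftGood S f g pE u₁ u₂ ε _ w₁ w₂ m (M ≫ c) := fun hM => by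
      simpa using hM.comp hS hg h.pb hF₁ c hcp fc hfc₁ hfc₂ (𝟙 Z) (by simp) (by simp) hw.1
    have hcj : ∀ N : A ⟶ E₁, FibHomotopic S pE₁ N (N ≫ c ≫ j) := fun N => by
      simpa using ((fibHomotopic_of_trivFib hS hc hc' (by simp [hjc]) :
        FibHomotopic S c (c ≫ j) (𝟙 E₁)).precomp N).symm.postcomp hS hpE₁ (𝟙 E₁) pE
          (by simp [hcp])
    refine ((hcj M).trans hS hpE₁ ?_).trans hS hpE₁ (hcj M').symm
    simpa using (h.unique a w₁ w₂ hw m hm _ _ (good_comp hM) (good_comp hM')).postcomp hS hpE₁ j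
      (𝟙 X) (by simp [← hcp, reassoc_of% hjc])

theorem fibHomotopic_of_transpose (hS : IsPathCategory S) (hg : S.Fib g)
    (h : IsHPi S f g pE u₁ u₂ ε) {Cc FC : C} {pC : Cc ⟶ X} {w₁ : FC ⟶ Cc} {w₂ : FC ⟶ Y}
    (hw : IsPB w₁ w₂ pC f) {M M' : Cc ⟶ E} (hM : M ≫ pE = pC) (hM' : M' ≫ pE = pC)
    (hMM' : ∀ m m' : FC ⟶ F, m ≫ u₁ = w₁ ≫ M → m ≫ u₂ = w₂ → m' ≫ u₁ = w₁ ≫ M' →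
      m' ≫ u₂ = w₂ → FibHomotopic S g (m ≫ ε) (m' ≫ ε)) :
    FibHomotopic S pE M M' := by
  obtain ⟨m, hm₁, hm₂⟩ := h.pb.exists_lift (w₁ ≫ M) w₂ (by rw [Category.assoc, hM, hw.1])
  obtain ⟨m', hm'₁, hm'₂⟩ := h.pb.exists_lift (w₁ ≫ M') w₂ (by rw [Category.assoc, hM', hw.1])
  refine h.unique pC w₁ w₂ hw (m' ≫ ε) (by rw [Category.assoc, h.over', hm'₂]) M M'
    ⟨hM, fun φ h₁ h₂ => ?_⟩ ⟨hM', fun φ h₁ h₂ => ?_⟩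
  · rw [h.pb.hom_ext (z₁ := φ) (h₁.trans hm₁.symm) (h₂.trans hm₂.symm)]
    exact hMM' m m' hm₁ hm₂ hm'₁ hm'₂
  · rw [h.pb.hom_ext (z₁ := φ) (h₁.trans hm'₁.symm) (h₂.trans hm'₂.symm)]
    exact FibHomotopic.refl hS hg _

end IsHPi

theorem exists_hPi_fibration_with_strict_counit (hS : IsPathCategory S) (hPi : HasHPi S)
    {Y X A B : C} {f : Y ⟶ X} (hf : S.Fib f) {pA : A ⟶ Y} (hpA : S.Fib pA) {p : B ⟶ A} (hp : S.Fib p)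
    {EA FA : C} {pEA : EA ⟶ X} {uA₁ : FA ⟶ EA} {uA₂ : FA ⟶ Y} {εA : FA ⟶ A}
    (hEA : IsHPi S f pA pEA uA₁ uA₂ εA) :
    ∃ (EB FB : C) (Pifp : EB ⟶ EA) (uB₁ : FB ⟶ EB) (uB₂ : FB ⟶ Y) (εB : FB ⟶ B)
      (μ : FB ⟶ FA), IsHPi S f (p ≫ pA) (Pifp ≫ pEA) uB₁ uB₂ εB ∧ S.Fib Pifp ∧
      μ ≫ uA₁ = uB₁ ≫ Pifp ∧ μ ≫ uA₂ = uB₂ ∧ εB ≫ p = μ ≫ εA := by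
  have hg := hS.fib_comp _ _ hp hpA
  obtain ⟨E₀, F₀, pE₀, u₁, u₂, ε₀, h₀⟩ := hPi f (p ≫ pA) hf hg
  obtain ⟨G₀, hG₀⟩ := hEA.lift pE₀ u₁ u₂ h₀.pb (ε₀ ≫ p) (by rw [Category.assoc, h₀.over'])
  -- replace `G₀ : E₀ ⟶ EA` by a fibration `q` through its mapping path space over `X`
  obtain ⟨PA, rA, sA, tA, hPA⟩ := exists_relPathObj hS hEA.fib
  obtain ⟨E₁, j, q, c, -, hq, -, hc, hc', hjc, hcq⟩ :=
    exists_factorization_over hS hEA.fib hPA G₀ (hG₀.1 ▸ h₀.fib)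
  have hcp : c ≫ pE₀ = q ≫ pEA := by rw [← hG₀.1, ← hcq.comp_eq, Category.assoc]
  obtain ⟨F₁, v₂, v₁, hF₁, -⟩ := hS.pullback f (q ≫ pEA) hf
  obtain ⟨fc, hfc₁, hfc₂⟩ := h₀.pb.exists_lift (v₁ ≫ c) v₂ (by rw [Category.assoc, hcp, hF₁.1])
  have hE₁ := h₀.of_retract hS hg (hS.fib_comp _ _ hq hEA.fib) hc hc' hjc hcp hF₁.flip hfc₁ hfc₂
  obtain ⟨μ, hμ₁, hμ₂⟩ := hEA.pb.exists_lift (v₁ ≫ q) v₂ (by rw [Category.assoc, hF₁.1])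
  have hq_good : HPiLiftGood S f pA pEA uA₁ uA₂ εA _ v₁ v₂ (fc ≫ ε₀ ≫ p) q :=
    (hG₀.precomp hEA.pb h₀.pb.1 c fc hfc₁ hfc₂).of_fibHomotopic hS hpA hEA.fib hEA.pb
      hEA.over' (by rw [hcp, ← hF₁.1]) hcq hcp.symm
  -- make the counit square commute on the nose
  obtain ⟨εB, hεB, hEB⟩ := hE₁.exists_counit_lift hS hpA hp (a := μ ≫ εA)
    (by simpa using (hq_good.2 μ hμ₁ hμ₂).symm)
  exact ⟨E₁, F₁, q, v₁, v₂, εB, μ, hEB, hq, hμ₁, hμ₂, hεB⟩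

end

/-- Let `C` be a path category with homotopy Π-types, `f : Y ⟶ X` a
fibration, `pA : A ⟶ Y` a fibration (an object of `C(Y)`) and `p : B ⟶ A` a
fibration in `C(Y)`; let `(pEA, uA₁, uA₂, εA)` be a homotopy Π-type of `pA` along
`f`.  Then there is a homotopy Π-type `(pEB, uB₁, uB₂, εB)` of `B` (as an object of
`C(Y)` via `p ≫ pA`) along `f`, together with a fibration `Π_f(p) : EB ⟶ EA` over
`X`, such that (1) the square of counits commutes, and (2) for each object
`pC : Cc ⟶ X` of `C(X)` the induced square of homotopy hom-sets is a pullback of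
sets (stated elementwise: the map to the cone of the cospan is injective and
surjective up to fibrewise homotopy). -/
theorem hPi_of_fibration_is_fibration {C : Type u} [Category.{v} C]
    (S : PathStruct C) (hS : IsPathCategory S) (hPi : HasHPi S)
    {Y X A B : C} (f : Y ⟶ X) (hf : S.Fib f)
    (pA : A ⟶ Y) (hpA : S.Fib pA) (p : B ⟶ A) (hp : S.Fib p)
    {EA FA : C} (pEA : EA ⟶ X) (uA₁ : FA ⟶ EA) (uA₂ : FA ⟶ Y) (εA : FA ⟶ A)
    (hEA : IsHPi S f pA pEA uA₁ uA₂ εA) :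
    ∃ (EB FB : C) (pEB : EB ⟶ X) (uB₁ : FB ⟶ EB) (uB₂ : FB ⟶ Y) (εB : FB ⟶ B),
      IsHPi S f (p ≫ pA) pEB uB₁ uB₂ εB ∧
      ∃ Pifp : EB ⟶ EA, S.Fib Pifp ∧ Pifp ≫ pEA = pEB ∧
        -- (1) the square of counits commutes: `f*(Π_f p) ≫ εA = εB ≫ p`
        (∀ m : FB ⟶ FA, m ≫ uA₁ = uB₁ ≫ Pifp → m ≫ uA₂ = uB₂ →
          εB ≫ p = m ≫ εA) ∧
        -- (2) for each object `pC : Cc ⟶ X` of `C(X)`, with `(FC, w₁, w₂)` the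
        -- pullback `f*C`, the square of homotopy hom-sets is a pullback of sets:
        (∀ {Cc FC : C} (pC : Cc ⟶ X), S.Fib pC →
          ∀ (w₁ : FC ⟶ Cc) (w₂ : FC ⟶ Y), IsPB w₁ w₂ pC f →
          -- commutativity of the square
          (∀ MB : Cc ⟶ EB, MB ≫ pEB = pC →
            ∀ mB : FC ⟶ FB, mB ≫ uB₁ = w₁ ≫ MB → mB ≫ uB₂ = w₂ →
            ∀ mA : FC ⟶ FA, mA ≫ uA₁ = w₁ ≫ (MB ≫ Pifp) → mA ≫ uA₂ = w₂ →
              FibHomotopic S pA (mA ≫ εA) (mB ≫ εB ≫ p)) ∧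
          -- injectivity
          (∀ MB MB' : Cc ⟶ EB, MB ≫ pEB = pC → MB' ≫ pEB = pC →
            FibHomotopic S pEA (MB ≫ Pifp) (MB' ≫ Pifp) →
            (∀ mB mB' : FC ⟶ FB, mB ≫ uB₁ = w₁ ≫ MB → mB ≫ uB₂ = w₂ →
              mB' ≫ uB₁ = w₁ ≫ MB' → mB' ≫ uB₂ = w₂ →
              FibHomotopic S (p ≫ pA) (mB ≫ εB) (mB' ≫ εB)) →
            FibHomotopic S pEB MB MB') ∧
          -- surjectivity
          (∀ (MA : Cc ⟶ EA) (n : FC ⟶ B), MA ≫ pEA = pC → n ≫ (p ≫ pA) = w₂ →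
            (∀ mA : FC ⟶ FA, mA ≫ uA₁ = w₁ ≫ MA → mA ≫ uA₂ = w₂ →
              FibHomotopic S pA (mA ≫ εA) (n ≫ p)) →
            ∃ MB : Cc ⟶ EB, MB ≫ pEB = pC ∧
              FibHomotopic S pEA (MB ≫ Pifp) MA ∧
              ∀ mB : FC ⟶ FB, mB ≫ uB₁ = w₁ ≫ MB → mB ≫ uB₂ = w₂ →
                FibHomotopic S (p ≫ pA) (mB ≫ εB) n)) := by
  have hg := hS.fib_comp _ _ hp hpA
  obtain ⟨EB, FB, Pifp, uB₁, uB₂, εB, μ, hEB, hPifp, hμ₁, hμ₂, hεB⟩ :=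
    exists_hPi_fibration_with_strict_counit hS hPi hf hpA hp hEA
  refine ⟨EB, FB, _, uB₁, uB₂, εB, hEB, Pifp, hPifp, rfl, fun m h₁ h₂ => ?_,
    fun pC _ w₁ w₂ hw => ⟨?_, ?_, ?_⟩⟩
  · rw [hεB, hEA.pb.hom_ext (z₁ := m) (h₁.trans hμ₁.symm) (h₂.trans hμ₂.symm)]
  · intro MB _ mB hmB₁ hmB₂ mA hmA₁ hmA₂
    rw [hEA.pb.hom_ext (z₁ := mA) (z₂ := mB ≫ μ) (by simp [hmA₁, hμ₁, reassoc_of% hmB₁])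
      (by simp [hmA₂, hμ₂, hmB₂]), Category.assoc, ← hεB]
    exact FibHomotopic.refl hS hpA _
  · intro MB MB' hMB hMB' _ hεBB'
    exact hEB.fibHomotopic_of_transpose hS hg hw hMB hMB' hεBB'
  · intro MA n hMA hn hMA_good
    obtain ⟨MB, hMB⟩ := hEB.lift pC w₁ w₂ hw n hn
    have hMBA : HPiLiftGood S f pA pEA uA₁ uA₂ εA pC w₁ w₂ (n ≫ p) (MB ≫ Pifp) :=
      hMB.comp hS hpA hEA.pb hEB.pb Pifp rfl μ hμ₁ hμ₂ p rfl hεB hw.1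
    exact ⟨MB, hMB.1, hEA.unique pC w₁ w₂ hw (n ≫ p) (by rw [Category.assoc, hn]) _ MA hMBA
      ⟨hMA, hMA_good⟩, hMB.2⟩

end EffPaper
end
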